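/- arXiv:1601.04265 — 7 statements merged into one kernel-verified Lean document; each statement's English description precedes it below -/
import Mathlib

section
/- For all x, y ∈ M, the inner product ⟨a_x, a_y⟩ in ℂ^Λ equals 1 if x = y and equals 0 if x ≠ y; that is, the family {a_x}_{x∈M} is orthonormal. (This is the single-particle form of the canonical anticommutation relation {a†_{x,σ}, a_{y,τ}} = δ_{x,y} δ_{σ,τ}.) -/
/-!
On a bond `p = (x, y)` the vector `a_x` has coefficients `μ(1, -1)` on the decorations `(u_p, ū_p)`
and `a_y` has `μ(1, 1)`, which are orthogonal. In terms of indicators `a, b` (of `p.1 = x`,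
`p.2 = x`) and `c, d` (of `p.1 = y`, `p.2 = y`) this is `(a + b)(c + d) + (b - a)(d - c) = 2(ac + bd)`,
so the Gram matrix of the unnormalized vectors is `δ_{xy} (1 + 2μ² (out-degree + in-degree))`.
Since no bond occurs in both orientations, out-degree plus in-degree is the coordination number
`ζ`, and the factor `(1 + 2ζμ²)^{-1/2}` normalizes every `a_x`.
-/

open Finset

namespace DecoratedLattice

variable {M : Type*} [DecidableEq M]

lemma sum_boole_mul_boole {ι R : Type*} [Semiring R] (s : Finset ι) (f : ι → M) (x y : M) :
    ∑ i ∈ s, (if f i = x then (1 : R) else 0) * (if f i = y then 1 else 0) =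
      if x = y then (#(s.filter (f · = x)) : R) else 0 := by
  split_ifs with h
  · subst h
    simp only [ite_zero_mul_ite_zero, and_self, mul_one, sum_boole]
  · exact sum_eq_zero fun i _ => by grind

section Degree

variable [Fintype M] {B : Finset (M × M)}

lemma card_filter_fst_eq (x : M) :
    #(B.filter (·.1 = x)) = #(univ.filter fun y => (x, y) ∈ B) :=
  card_nbij' Prod.snd (Prod.mk x) (by intro p; grind) (by intro y; grind) (by intro p; grind)
    (by intro y; grind)

lemma card_filter_snd_eq (x : M) :
    #(B.filter (·.2 = x)) = #(univ.filter fun y => (y, x) ∈ B) :=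
  card_nbij' Prod.fst (Prod.mk · x) (by intro p; grind) (by intro y; grind) (by intro p; grind)
    (by intro y; grind)

lemma card_filter_fst_add_card_filter_snd (hasym : ∀ p ∈ B, (p.2, p.1) ∉ B) (x : M) :
    #(B.filter (·.1 = x)) + #(B.filter (·.2 = x)) =
      #(univ.filter fun y => (x, y) ∈ B ∨ (y, x) ∈ B) := by
  rw [card_filter_fst_eq, card_filter_snd_eq, filter_or, card_union_of_disjoint]
  exact disjoint_filter.2 fun y _ hxy hyx => hasym (x, y) hxy hyx

end Degree

noncomputable def unnormalizedOrbital (B : Finset (M × M)) (μ : ℝ) (x : M) :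
    EuclideanSpace ℂ (M ⊕ ({p // p ∈ B} ⊕ {p // p ∈ B})) :=
  EuclideanSpace.single (Sum.inl x) (1 : ℂ)
    + (μ : ℂ) • ∑ p ∈ Finset.univ.filter (fun p : {p // p ∈ B} => (p : M × M).1 = x),
        (EuclideanSpace.single (Sum.inr (Sum.inl p)) (1 : ℂ)
          - EuclideanSpace.single (Sum.inr (Sum.inr p)) (1 : ℂ))
    + (μ : ℂ) • ∑ p ∈ Finset.univ.filter (fun p : {p // p ∈ B} => (p : M × M).2 = x),
        (EuclideanSpace.single (Sum.inr (Sum.inl p)) (1 : ℂ)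
          + EuclideanSpace.single (Sum.inr (Sum.inr p)) (1 : ℂ))

variable {B : Finset (M × M)} (μ : ℝ) (x : M)

@[simp]
lemma unnormalizedOrbital_inl (z : M) :
    unnormalizedOrbital B μ x (Sum.inl z) = if z = x then 1 else 0 := by
  simp [unnormalizedOrbital, PiLp.single_apply]

@[simp]
lemma unnormalizedOrbital_inr_inl (p : {p // p ∈ B}) :
    unnormalizedOrbital B μ x (Sum.inr (Sum.inl p)) =
      μ * ((if p.1.1 = x then 1 else 0) + (if p.1.2 = x then 1 else 0)) := by
  simp [unnormalizedOrbital, Finset.sum_apply, Pi.single_apply, mul_add]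

@[simp]
lemma unnormalizedOrbital_inr_inr (p : {p // p ∈ B}) :
    unnormalizedOrbital B μ x (Sum.inr (Sum.inr p)) =
      μ * ((if p.1.2 = x then 1 else 0) - (if p.1.1 = x then 1 else 0)) := by
  simp [unnormalizedOrbital, Finset.sum_apply, Pi.single_apply, mul_sub]
  ring

lemma inner_unnormalizedOrbital [Fintype M] (y : M) :
    inner ℂ (unnormalizedOrbital B μ x) (unnormalizedOrbital B μ y) =
      (if x = y then 1 else 0) + 2 * μ ^ 2 * ∑ p ∈ B,
        ((if p.1 = x then 1 else 0) * (if p.1 = y then 1 else 0)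
          + (if p.2 = x then 1 else 0) * (if p.2 = y then 1 else 0)) := by
  simp only [PiLp.inner_apply, Fintype.sum_sum_type, unnormalizedOrbital_inl,
    unnormalizedOrbital_inr_inl, unnormalizedOrbital_inr_inr, RCLike.inner_apply]
  rw [← sum_add_distrib, ← sum_coe_sort B, mul_sum]
  congr 1
  · simp [apply_ite (starRingEnd ℂ)]
  · refine sum_congr rfl fun p _ => ?_
    simp only [map_mul, map_add, map_sub, Complex.conj_ofReal, apply_ite (starRingEnd ℂ), map_one,
      map_zero]
    ring

lemma inner_unnormalizedOrbital_eq_ite [Fintype M] (hasym : ∀ p ∈ B, (p.2, p.1) ∉ B) (ζ : ℕ)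
    (hreg : ∀ x : M, #(univ.filter fun y : M => (x, y) ∈ B ∨ (y, x) ∈ B) = ζ) (y : M) :
    inner ℂ (unnormalizedOrbital B μ x) (unnormalizedOrbital B μ y) =
      if x = y then ((1 + 2 * ζ * μ ^ 2 : ℝ) : ℂ) else 0 := by
  rw [inner_unnormalizedOrbital, sum_add_distrib, sum_boole_mul_boole B Prod.fst,
    sum_boole_mul_boole B Prod.snd]
  split_ifs with h
  · subst h
    rw [← Nat.cast_add, card_filter_fst_add_card_filter_snd hasym, hreg]
    push_cast
    ring
  · simp

end DecoratedLattice

open DecoratedLattice in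
theorem a_vectors_orthonormal_general
    {M : Type*} [Fintype M] [DecidableEq M]
    (B : Finset (M × M))
    (hasym : ∀ p ∈ B, (p.2, p.1) ∉ B)
    (ζ : ℕ)
    (hreg : ∀ x : M,
      (Finset.univ.filter fun y : M => (x, y) ∈ B ∨ (y, x) ∈ B).card = ζ)
    (μ : ℝ)
    (a : M → EuclideanSpace ℂ (M ⊕ ({p // p ∈ B} ⊕ {p // p ∈ B})))
    (ha : ∀ x : M, a x = (((Real.sqrt (1 + 2 * ζ * μ ^ 2))⁻¹ : ℝ) : ℂ) •
      (EuclideanSpace.single (Sum.inl x) (1 : ℂ)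
        + (μ : ℂ) • ∑ p ∈ Finset.univ.filter (fun p : {p // p ∈ B} => (p : M × M).1 = x),
            (EuclideanSpace.single (Sum.inr (Sum.inl p)) (1 : ℂ)
              - EuclideanSpace.single (Sum.inr (Sum.inr p)) (1 : ℂ))
        + (μ : ℂ) • ∑ p ∈ Finset.univ.filter (fun p : {p // p ∈ B} => (p : M × M).2 = x),
            (EuclideanSpace.single (Sum.inr (Sum.inl p)) (1 : ℂ)
              + EuclideanSpace.single (Sum.inr (Sum.inr p)) (1 : ℂ)))) :
    ∀ x y : M, (inner ℂ (a x) (a y) : ℂ) = if x = y then 1 else 0 := by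
  set t : ℝ := 1 + 2 * ζ * μ ^ 2
  have ht : 0 < t := by positivity
  have ha' : ∀ x, a x = (((√t)⁻¹ : ℝ) : ℂ) • unnormalizedOrbital B μ x := ha
  intro x y
  rw [ha', ha', inner_smul_left, inner_smul_right, Complex.conj_ofReal,
    inner_unnormalizedOrbital_eq_ite μ x hasym ζ hreg]
  split_ifs
  · have hnorm : (√t)⁻¹ * ((√t)⁻¹ * t) = 1 := by
      rw [← mul_assoc, ← mul_inv, Real.mul_self_sqrt ht.le, inv_mul_cancel₀ ht.ne']
    rw [← Complex.ofReal_mul, ← Complex.ofReal_mul, hnorm, Complex.ofReal_one]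
  · simp

/-- On the decorated lattice `Λ = M ⊕ B ⊕ B`, the vectors
`a_x = (1+2ζμ²)^{-1/2} (e_x + μ Σ_{(x,y)∈B} (e_{u(x,y)} - e_{ū(x,y)})
 + μ Σ_{(y,x)∈B} (e_{u(y,x)} + e_{ū(y,x)}))` form an orthonormal family:
`⟨a_x, a_y⟩ = δ_{x,y}`. -/
theorem a_vectors_orthonormal
    {M : Type*} [Fintype M] [DecidableEq M] [Nonempty M]
    (B : Finset (M × M))
    (hirr : ∀ p ∈ B, p.1 ≠ p.2)
    (hasym : ∀ p ∈ B, (p.2, p.1) ∉ B)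
    (ζ : ℕ) (hζ : 1 ≤ ζ)
    (hreg : ∀ x : M,
      (Finset.univ.filter fun y : M => (x, y) ∈ B ∨ (y, x) ∈ B).card = ζ)
    (μ : ℝ) (hμ : 0 < μ)
    (a : M → EuclideanSpace ℂ (M ⊕ ({p // p ∈ B} ⊕ {p // p ∈ B})))
    (ha : ∀ x : M, a x = (((Real.sqrt (1 + 2 * ζ * μ ^ 2))⁻¹ : ℝ) : ℂ) •
      (EuclideanSpace.single (Sum.inl x) (1 : ℂ)
        + (μ : ℂ) • ∑ p ∈ Finset.univ.filter (fun p : {p // p ∈ B} => (p : M × M).1 = x),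
            (EuclideanSpace.single (Sum.inr (Sum.inl p)) (1 : ℂ)
              - EuclideanSpace.single (Sum.inr (Sum.inr p)) (1 : ℂ))
        + (μ : ℂ) • ∑ p ∈ Finset.univ.filter (fun p : {p // p ∈ B} => (p : M × M).2 = x),
            (EuclideanSpace.single (Sum.inr (Sum.inl p)) (1 : ℂ)
              + EuclideanSpace.single (Sum.inr (Sum.inr p)) (1 : ℂ)))) :
    ∀ x y : M, (inner ℂ (a x) (a y) : ℂ) = if x = y then 1 else 0 :=
  a_vectors_orthonormal_general B hasym ζ hreg μ a ha
end

section
/- For every x ∈ M and every bond (y,z) ∈ B, the inner products ⟨a_x, b_{u(y,z)}⟩ and ⟨a_x, b_{ū(y,z)}⟩ in ℂ^Λ are both 0; that is, every a-vector is orthogonal to every b-vector. (This is the single-particle form of the anticommutation relation {a†_{x,σ}, b_{v,τ}} = 0.) -/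
/-!
Up to the normalisation, `a_x` has coefficient `μ ([y = x] + [z = x])` at `u(y,z)` and
`μ ([z = x] - [y = x])` at `ū(y,z)`, while its only site coefficient is `1` at `x`.
Pairing with `b_{u(y,z)} = e_u - μ (e_y + e_z)` and `b_{ū(y,z)} = e_ū + μ (e_y - e_z)`, the
decoration and site contributions cancel exactly.
-/

open Finset ComplexConjugate

namespace DecoratedLattice

variable {M : Type*} [DecidableEq M] {B : Finset (M × M)}

abbrev Site (B : Finset (M × M)) := M ⊕ ({p // p ∈ B} ⊕ {p // p ∈ B})

noncomputable def aTilde (μ : ℝ) (x : M) : EuclideanSpace ℂ (Site B) :=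
  EuclideanSpace.single (Sum.inl x) (1 : ℂ)
    + (μ : ℂ) • ∑ p ∈ univ.filter (fun p : {p // p ∈ B} => (p : M × M).1 = x),
        (EuclideanSpace.single (Sum.inr (Sum.inl p)) (1 : ℂ)
          - EuclideanSpace.single (Sum.inr (Sum.inr p)) (1 : ℂ))
    + (μ : ℂ) • ∑ p ∈ univ.filter (fun p : {p // p ∈ B} => (p : M × M).2 = x),
        (EuclideanSpace.single (Sum.inr (Sum.inl p)) (1 : ℂ)
          + EuclideanSpace.single (Sum.inr (Sum.inr p)) (1 : ℂ))

noncomputable def bU (μ : ℝ) (p : {p // p ∈ B}) : EuclideanSpace ℂ (Site B) :=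
  EuclideanSpace.single (Sum.inr (Sum.inl p)) (1 : ℂ)
    - (μ : ℂ) • (EuclideanSpace.single (Sum.inl (p : M × M).1) (1 : ℂ)
      + EuclideanSpace.single (Sum.inl (p : M × M).2) (1 : ℂ))

noncomputable def bUbar (μ : ℝ) (p : {p // p ∈ B}) : EuclideanSpace ℂ (Site B) :=
  EuclideanSpace.single (Sum.inr (Sum.inr p)) (1 : ℂ)
    + (μ : ℂ) • (EuclideanSpace.single (Sum.inl (p : M × M).1) (1 : ℂ)
      - EuclideanSpace.single (Sum.inl (p : M × M).2) (1 : ℂ))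

variable (μ : ℝ) (x : M) (p : {p // p ∈ B})

lemma aTilde_apply_inl (y : M) : aTilde (B := B) μ x (Sum.inl y) = if y = x then 1 else 0 := by
  simp [aTilde, PiLp.single_apply]

lemma aTilde_apply_inr_inl :
    aTilde μ x (Sum.inr (Sum.inl p)) =
      (if p.1.1 = x then (μ : ℂ) else 0) + (if p.1.2 = x then (μ : ℂ) else 0) := by
  simp [aTilde, Pi.single_apply]

lemma aTilde_apply_inr_inr :
    aTilde μ x (Sum.inr (Sum.inr p)) =
      (if p.1.2 = x then (μ : ℂ) else 0) - (if p.1.1 = x then (μ : ℂ) else 0) := by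
  simp [aTilde, Pi.single_apply]
  ring

variable [Fintype M]

lemma inner_bU (v : EuclideanSpace ℂ (Site B)) :
    inner ℂ v (bU μ p) =
      conj (v (Sum.inr (Sum.inl p))) -
        μ * (conj (v (Sum.inl p.1.1)) + conj (v (Sum.inl p.1.2))) := by
  simp only [bU, inner_sub_right, inner_add_right, inner_smul_right,
    EuclideanSpace.inner_single_right, one_mul]

lemma inner_bUbar (v : EuclideanSpace ℂ (Site B)) :
    inner ℂ v (bUbar μ p) =
      conj (v (Sum.inr (Sum.inr p))) +
        μ * (conj (v (Sum.inl p.1.1)) - conj (v (Sum.inl p.1.2))) := by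
  simp only [bUbar, inner_sub_right, inner_add_right, inner_smul_right,
    EuclideanSpace.inner_single_right, one_mul]

lemma inner_aTilde_bU : inner ℂ (aTilde μ x) (bU μ p) = 0 := by
  rw [inner_bU, aTilde_apply_inr_inl, aTilde_apply_inl, aTilde_apply_inl]
  simp only [map_add, apply_ite conj, Complex.conj_ofReal, map_one, map_zero]
  split_ifs <;> ring

lemma inner_aTilde_bUbar : inner ℂ (aTilde μ x) (bUbar μ p) = 0 := by
  rw [inner_bUbar, aTilde_apply_inr_inr, aTilde_apply_inl, aTilde_apply_inl]
  simp only [map_sub, apply_ite conj, Complex.conj_ofReal, map_one, map_zero]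
  split_ifs <;> ring

end DecoratedLattice

open DecoratedLattice

theorem a_vectors_orthogonal_to_b_vectors_general
    {M : Type*} [Fintype M] [DecidableEq M]
    (B : Finset (M × M))
    (ζ : ℕ) (μ : ℝ)
    (a : M → EuclideanSpace ℂ (M ⊕ ({p // p ∈ B} ⊕ {p // p ∈ B})))
    (ha : ∀ x : M, a x = (((Real.sqrt (1 + 2 * ζ * μ ^ 2))⁻¹ : ℝ) : ℂ) •
      (EuclideanSpace.single (Sum.inl x) (1 : ℂ)
        + (μ : ℂ) • ∑ p ∈ Finset.univ.filter (fun p : {p // p ∈ B} => (p : M × M).1 = x),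
            (EuclideanSpace.single (Sum.inr (Sum.inl p)) (1 : ℂ)
              - EuclideanSpace.single (Sum.inr (Sum.inr p)) (1 : ℂ))
        + (μ : ℂ) • ∑ p ∈ Finset.univ.filter (fun p : {p // p ∈ B} => (p : M × M).2 = x),
            (EuclideanSpace.single (Sum.inr (Sum.inl p)) (1 : ℂ)
              + EuclideanSpace.single (Sum.inr (Sum.inr p)) (1 : ℂ))))
    (bu : {p // p ∈ B} → EuclideanSpace ℂ (M ⊕ ({p // p ∈ B} ⊕ {p // p ∈ B})))
    (hbu : ∀ p : {p // p ∈ B}, bu p = EuclideanSpace.single (Sum.inr (Sum.inl p)) (1 : ℂ)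
      - (μ : ℂ) • (EuclideanSpace.single (Sum.inl (p : M × M).1) (1 : ℂ)
          + EuclideanSpace.single (Sum.inl (p : M × M).2) (1 : ℂ)))
    (bbar : {p // p ∈ B} → EuclideanSpace ℂ (M ⊕ ({p // p ∈ B} ⊕ {p // p ∈ B})))
    (hbbar : ∀ p : {p // p ∈ B}, bbar p = EuclideanSpace.single (Sum.inr (Sum.inr p)) (1 : ℂ)
      + (μ : ℂ) • (EuclideanSpace.single (Sum.inl (p : M × M).1) (1 : ℂ)
          - EuclideanSpace.single (Sum.inl (p : M × M).2) (1 : ℂ))) :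
    ∀ (x : M) (p : {p // p ∈ B}),
      (inner ℂ (a x) (bu p) : ℂ) = 0 ∧ (inner ℂ (a x) (bbar p) : ℂ) = 0 := by
  intro x p
  rw [show a x = _ • aTilde μ x from ha x, show bu p = bU μ p from hbu p,
    show bbar p = bUbar μ p from hbbar p, inner_smul_left, inner_smul_left,
    inner_aTilde_bU, inner_aTilde_bUbar, mul_zero]
  exact ⟨rfl, rfl⟩

/-- On the decorated lattice `Λ = M ⊕ B ⊕ B`, every `a`-vector is orthogonal to every
`b`-vector: `⟨a_x, b_{u(y,z)}⟩ = 0` and `⟨a_x, b_{ū(y,z)}⟩ = 0` for all `x ∈ M` and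
all bonds `(y,z) ∈ B`. -/
theorem a_vectors_orthogonal_to_b_vectors
    {M : Type*} [Fintype M] [DecidableEq M] [Nonempty M]
    (B : Finset (M × M))
    (hirr : ∀ p ∈ B, p.1 ≠ p.2)
    (hasym : ∀ p ∈ B, (p.2, p.1) ∉ B)
    (ζ : ℕ) (hζ : 1 ≤ ζ)
    (hreg : ∀ x : M,
      (Finset.univ.filter fun y : M => (x, y) ∈ B ∨ (y, x) ∈ B).card = ζ)
    (μ : ℝ) (hμ : 0 < μ)
    (a : M → EuclideanSpace ℂ (M ⊕ ({p // p ∈ B} ⊕ {p // p ∈ B})))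
    (ha : ∀ x : M, a x = (((Real.sqrt (1 + 2 * ζ * μ ^ 2))⁻¹ : ℝ) : ℂ) •
      (EuclideanSpace.single (Sum.inl x) (1 : ℂ)
        + (μ : ℂ) • ∑ p ∈ Finset.univ.filter (fun p : {p // p ∈ B} => (p : M × M).1 = x),
            (EuclideanSpace.single (Sum.inr (Sum.inl p)) (1 : ℂ)
              - EuclideanSpace.single (Sum.inr (Sum.inr p)) (1 : ℂ))
        + (μ : ℂ) • ∑ p ∈ Finset.univ.filter (fun p : {p // p ∈ B} => (p : M × M).2 = x),
            (EuclideanSpace.single (Sum.inr (Sum.inl p)) (1 : ℂ)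
              + EuclideanSpace.single (Sum.inr (Sum.inr p)) (1 : ℂ))))
    (bu : {p // p ∈ B} → EuclideanSpace ℂ (M ⊕ ({p // p ∈ B} ⊕ {p // p ∈ B})))
    (hbu : ∀ p : {p // p ∈ B}, bu p = EuclideanSpace.single (Sum.inr (Sum.inl p)) (1 : ℂ)
      - (μ : ℂ) • (EuclideanSpace.single (Sum.inl (p : M × M).1) (1 : ℂ)
          + EuclideanSpace.single (Sum.inl (p : M × M).2) (1 : ℂ)))
    (bbar : {p // p ∈ B} → EuclideanSpace ℂ (M ⊕ ({p // p ∈ B} ⊕ {p // p ∈ B})))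
    (hbbar : ∀ p : {p // p ∈ B}, bbar p = EuclideanSpace.single (Sum.inr (Sum.inr p)) (1 : ℂ)
      + (μ : ℂ) • (EuclideanSpace.single (Sum.inl (p : M × M).1) (1 : ℂ)
          - EuclideanSpace.single (Sum.inl (p : M × M).2) (1 : ℂ))) :
    ∀ (x : M) (p : {p // p ∈ B}),
      (inner ℂ (a x) (bu p) : ℂ) = 0 ∧ (inner ℂ (a x) (bbar p) : ℂ) = 0 :=
  a_vectors_orthogonal_to_b_vectors_general B ζ μ a ha bu hbu bbar hbbar
end

section
/- The family consisting of the |M| vectors a_x (x ∈ M) together with the 2|B| vectors b_{u(x,y)} and b_{ū(x,y)} ((x,y) ∈ B) is a basis of ℂ^Λ; in particular these |M| + 2|B| = |Λ| vectors are linearly independent, so every single-electron state on Λ is a linear combination of a-states and b-states. -/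
/-- The `|M|` vectors `a_x` together with the `2|B|` vectors `b_{u(x,y)}`, `b_{ū(x,y)}`
form a basis of `ℂ^Λ` (`Λ = M ⊕ B ⊕ B`): they are linearly independent and span, so every
single-electron state on `Λ` is a linear combination of `a`-states and `b`-states. -/
theorem a_and_b_vectors_form_basis
    {M : Type*} [Fintype M] [DecidableEq M] [Nonempty M]
    (B : Finset (M × M))
    (hirr : ∀ p ∈ B, p.1 ≠ p.2)
    (hasym : ∀ p ∈ B, (p.2, p.1) ∉ B)
    (ζ : ℕ) (hζ : 1 ≤ ζ)
    (hreg : ∀ x : M,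
      (Finset.univ.filter fun y : M => (x, y) ∈ B ∨ (y, x) ∈ B).card = ζ)
    (μ : ℝ) (hμ : 0 < μ)
    (a : M → EuclideanSpace ℂ (M ⊕ ({p // p ∈ B} ⊕ {p // p ∈ B})))
    (ha : ∀ x : M, a x = (((Real.sqrt (1 + 2 * ζ * μ ^ 2))⁻¹ : ℝ) : ℂ) •
      (EuclideanSpace.single (Sum.inl x) (1 : ℂ)
        + (μ : ℂ) • ∑ p ∈ Finset.univ.filter (fun p : {p // p ∈ B} => (p : M × M).1 = x),
            (EuclideanSpace.single (Sum.inr (Sum.inl p)) (1 : ℂ)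
              - EuclideanSpace.single (Sum.inr (Sum.inr p)) (1 : ℂ))
        + (μ : ℂ) • ∑ p ∈ Finset.univ.filter (fun p : {p // p ∈ B} => (p : M × M).2 = x),
            (EuclideanSpace.single (Sum.inr (Sum.inl p)) (1 : ℂ)
              + EuclideanSpace.single (Sum.inr (Sum.inr p)) (1 : ℂ))))
    (bu : {p // p ∈ B} → EuclideanSpace ℂ (M ⊕ ({p // p ∈ B} ⊕ {p // p ∈ B})))
    (hbu : ∀ p : {p // p ∈ B}, bu p = EuclideanSpace.single (Sum.inr (Sum.inl p)) (1 : ℂ)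
      - (μ : ℂ) • (EuclideanSpace.single (Sum.inl (p : M × M).1) (1 : ℂ)
          + EuclideanSpace.single (Sum.inl (p : M × M).2) (1 : ℂ)))
    (bbar : {p // p ∈ B} → EuclideanSpace ℂ (M ⊕ ({p // p ∈ B} ⊕ {p // p ∈ B})))
    (hbbar : ∀ p : {p // p ∈ B}, bbar p = EuclideanSpace.single (Sum.inr (Sum.inr p)) (1 : ℂ)
      + (μ : ℂ) • (EuclideanSpace.single (Sum.inl (p : M × M).1) (1 : ℂ)
          - EuclideanSpace.single (Sum.inl (p : M × M).2) (1 : ℂ))) :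
    LinearIndependent ℂ (Sum.elim a (Sum.elim bu bbar)) ∧
      Submodule.span ℂ (Set.range (Sum.elim a (Sum.elim bu bbar))) = ⊤ := by
  classical
  -- span of the family
  set S := Submodule.span ℂ (Set.range (Sum.elim a (Sum.elim bu bbar))) with hSdef
  have haS : ∀ x, a x ∈ S := fun x => Submodule.subset_span ⟨Sum.inl x, rfl⟩
  have hbuS : ∀ p, bu p ∈ S := fun p => Submodule.subset_span ⟨Sum.inr (Sum.inl p), rfl⟩
  have hbbarS : ∀ p, bbar p ∈ S := fun p => Submodule.subset_span ⟨Sum.inr (Sum.inr p), rfl⟩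
  have hsqrt : (0:ℝ) < Real.sqrt (1 + 2 * ζ * μ ^ 2) := by
    apply Real.sqrt_pos.2; positivity
  -- the site basis vectors lie in the span
  have hx : ∀ x : M, EuclideanSpace.single (Sum.inl x) (1:ℂ) ∈ S := by
    intro x
    set F1 := Finset.univ.filter (fun p : {p // p ∈ B} => (p : M × M).1 = x) with hF1
    set F2 := Finset.univ.filter (fun p : {p // p ∈ B} => (p : M × M).2 = x) with hF2
    have hsum1 : ∑ p ∈ F1, (bu p - bbar p)
        = ∑ p ∈ F1, (EuclideanSpace.single (Sum.inr (Sum.inl p)) (1:ℂ)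
            - EuclideanSpace.single (Sum.inr (Sum.inr p)) (1:ℂ))
          - (F1.card : ℂ) • (((2:ℂ) * μ) • EuclideanSpace.single (Sum.inl x) (1:ℂ)) := by
      have : ∀ p ∈ F1, bu p - bbar p
          = (EuclideanSpace.single (Sum.inr (Sum.inl p)) (1:ℂ)
              - EuclideanSpace.single (Sum.inr (Sum.inr p)) (1:ℂ))
            - ((2:ℂ) * μ) • EuclideanSpace.single (Sum.inl x) (1:ℂ) := by
        intro p hp
        have hp1 : (p : M × M).1 = x := by simpa [hF1] using hp
        rw [hbu, hbbar, hp1]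
        module
      rw [Finset.sum_congr rfl this, Finset.sum_sub_distrib, Finset.sum_const,
        ← Nat.cast_smul_eq_nsmul ℂ]
    have hsum2 : ∑ p ∈ F2, (bu p + bbar p)
        = ∑ p ∈ F2, (EuclideanSpace.single (Sum.inr (Sum.inl p)) (1:ℂ)
            + EuclideanSpace.single (Sum.inr (Sum.inr p)) (1:ℂ))
          - (F2.card : ℂ) • (((2:ℂ) * μ) • EuclideanSpace.single (Sum.inl x) (1:ℂ)) := by
      have : ∀ p ∈ F2, bu p + bbar p
          = (EuclideanSpace.single (Sum.inr (Sum.inl p)) (1:ℂ)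
              + EuclideanSpace.single (Sum.inr (Sum.inr p)) (1:ℂ))
            - ((2:ℂ) * μ) • EuclideanSpace.single (Sum.inl x) (1:ℂ) := by
        intro p hp
        have hp2 : (p : M × M).2 = x := by simpa [hF2] using hp
        rw [hbu, hbbar, hp2]
        module
      rw [Finset.sum_congr rfl this, Finset.sum_sub_distrib, Finset.sum_const,
        ← Nat.cast_smul_eq_nsmul ℂ]
    have hkey : ((Real.sqrt (1 + 2 * ζ * μ ^ 2) : ℝ) : ℂ) • a x
        - (μ : ℂ) • ∑ p ∈ F1, (bu p - bbar p)
        - (μ : ℂ) • ∑ p ∈ F2, (bu p + bbar p)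
        = (1 + 2 * (μ:ℂ)^2 * ((F1.card : ℂ) + (F2.card : ℂ)))
            • EuclideanSpace.single (Sum.inl x) (1:ℂ) := by
      rw [ha, hsum1, hsum2, smul_smul, ← Complex.ofReal_mul,
        mul_inv_cancel₀ (ne_of_gt hsqrt), Complex.ofReal_one, one_smul]
      module
    have hc : (1 + 2 * (μ:ℂ)^2 * ((F1.card : ℂ) + (F2.card : ℂ))) ≠ 0 := by
      have : ((1 + 2 * μ^2 * ((F1.card : ℝ) + (F2.card : ℝ)) : ℝ) : ℂ)
          = 1 + 2 * (μ:ℂ)^2 * ((F1.card : ℂ) + (F2.card : ℂ)) := by push_cast; ring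
      rw [← this]
      exact_mod_cast ne_of_gt (by positivity :
        (0:ℝ) < 1 + 2 * μ^2 * ((F1.card : ℝ) + (F2.card : ℝ)))
    have hmem : ((Real.sqrt (1 + 2 * ζ * μ ^ 2) : ℝ) : ℂ) • a x
        - (μ : ℂ) • ∑ p ∈ F1, (bu p - bbar p)
        - (μ : ℂ) • ∑ p ∈ F2, (bu p + bbar p) ∈ S := by
      refine Submodule.sub_mem _ (Submodule.sub_mem _ ?_ ?_) ?_
      · exact Submodule.smul_mem _ _ (haS x)
      · exact Submodule.smul_mem _ _ (Submodule.sum_mem _ fun p _ =>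
          Submodule.sub_mem _ (hbuS p) (hbbarS p))
      · exact Submodule.smul_mem _ _ (Submodule.sum_mem _ fun p _ =>
          Submodule.add_mem _ (hbuS p) (hbbarS p))
    rw [hkey] at hmem
    have := Submodule.smul_mem S (1 + 2 * (μ:ℂ)^2 * ((F1.card : ℂ) + (F2.card : ℂ)))⁻¹ hmem
    rwa [inv_smul_smul₀ hc] at this
  -- the decoration basis vectors lie in the span
  have hu : ∀ p : {p // p ∈ B}, EuclideanSpace.single (Sum.inr (Sum.inl p)) (1:ℂ) ∈ S := by
    intro p
    have h : EuclideanSpace.single (Sum.inr (Sum.inl p)) (1:ℂ)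
        = bu p + (μ : ℂ) • (EuclideanSpace.single (Sum.inl (p : M × M).1) (1 : ℂ)
            + EuclideanSpace.single (Sum.inl (p : M × M).2) (1 : ℂ)) := by
      rw [hbu]; module
    rw [h]
    exact Submodule.add_mem _ (hbuS p)
      (Submodule.smul_mem _ _ (Submodule.add_mem _ (hx _) (hx _)))
  have hubar : ∀ p : {p // p ∈ B}, EuclideanSpace.single (Sum.inr (Sum.inr p)) (1:ℂ) ∈ S := by
    intro p
    have h : EuclideanSpace.single (Sum.inr (Sum.inr p)) (1:ℂ)
        = bbar p - (μ : ℂ) • (EuclideanSpace.single (Sum.inl (p : M × M).1) (1 : ℂ)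
            - EuclideanSpace.single (Sum.inl (p : M × M).2) (1 : ℂ)) := by
      rw [hbbar]; module
    rw [h]
    exact Submodule.sub_mem _ (hbbarS p)
      (Submodule.smul_mem _ _ (Submodule.sub_mem _ (hx _) (hx _)))
  -- spanning
  have hspan : ⊤ ≤ S := by
    rw [← (EuclideanSpace.basisFun (M ⊕ ({p // p ∈ B} ⊕ {p // p ∈ B})) ℂ).toBasis.span_eq, Submodule.span_le]
    rintro v ⟨i, rfl⟩
    have hv : (EuclideanSpace.basisFun (M ⊕ ({p // p ∈ B} ⊕ {p // p ∈ B})) ℂ).toBasis i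
        = EuclideanSpace.single i (1:ℂ) := by
      rw [OrthonormalBasis.coe_toBasis, EuclideanSpace.basisFun_apply]
    rw [hv]
    rcases i with x | (p | p)
    · exact hx x
    · exact hu p
    · exact hubar p
  have hcard : Fintype.card (M ⊕ ({p // p ∈ B} ⊕ {p // p ∈ B}))
      = Module.finrank ℂ (EuclideanSpace ℂ (M ⊕ ({p // p ∈ B} ⊕ {p // p ∈ B}))) := by
    simp [finrank_euclideanSpace]
  exact ⟨linearIndependent_of_top_le_span_of_card_eq_finrank hspan hcard,
    le_antisymm le_top hspan⟩
end

section
/- Viewing each b-vector as an element of ℝ^Λ, the real symmetric Λ×Λ matrix N_b := Σ_{(x,y)∈B} ( b_{u(x,y)} b_{u(x,y)}ᵀ + b_{ū(x,y)} b_{ū(x,y)}ᵀ ) (a sum of 2|B| rank-one matrices) has characteristic polynomial X^{|M|} · (X − 1)^{(ζ−1)|M|} · (X − (1+2ζμ²))^{|M|}. Equivalently, the single-particle Hamiltonian s Σ_v b†_v b_v has eigenvalue 0 with multiplicity |M| (the a-band) and two flat b-bands: eigenvalue s with multiplicity (ζ−1)|M| and eigenvalue (1+2ζμ²)s with multiplicity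 |M|. -/
open Matrix Polynomial Finset

set_option maxHeartbeats 1600000
set_option synthInstance.maxHeartbeats 400000

private lemma aux_smul_one_map {I : Type*} [Fintype I] [DecidableEq I]
    {R S : Type*} [CommRing R] [CommRing S] (f : R →+* S) (c : R) :
    (c • (1 : Matrix I I R)).map f = f c • (1 : Matrix I I S) := by
  ext i j
  by_cases h : i = j <;> simp [Matrix.one_apply, h]

private lemma aux_charmatrix_smul_one_map {I : Type*} [Fintype I] [DecidableEq I]
    {S : Type*} [CommRing S] (f : Polynomial ℝ →+* S) (c : ℝ) :
    (Matrix.charmatrix (c • (1 : Matrix I I ℝ))).map f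
      = (f Polynomial.X - f (Polynomial.C c)) • (1 : Matrix I I S) := by
  ext i j
  by_cases h : i = j
  · subst h
    simp [Matrix.charmatrix_apply_eq, Matrix.one_apply, map_sub]
  · simp [Matrix.charmatrix_apply_ne _ _ _ h, Matrix.one_apply, h]

/-- On the decorated lattice `Λ = M ⊕ B ⊕ B`, the real symmetric matrix
`N_b = Σ_{(x,y)∈B} (b_{u(x,y)} b_{u(x,y)}ᵀ + b_{ū(x,y)} b_{ū(x,y)}ᵀ)` has characteristic
polynomial `X^{|M|} (X-1)^{(ζ-1)|M|} (X-(1+2ζμ²))^{|M|}`: the single-particle Hamiltonian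
`s Σ_v b†_v b_v` has the `a`-band at energy `0` (multiplicity `|M|`) and two flat
`b`-bands at energies `s` (multiplicity `(ζ-1)|M|`) and `(1+2ζμ²)s` (multiplicity `|M|`). -/
theorem b_projector_charpoly
    {M : Type*} [Fintype M] [DecidableEq M] [Nonempty M]
    (B : Finset (M × M))
    (hirr : ∀ p ∈ B, p.1 ≠ p.2)
    (hasym : ∀ p ∈ B, (p.2, p.1) ∉ B)
    (ζ : ℕ) (hζ : 1 ≤ ζ)
    (hreg : ∀ x : M,
      (Finset.univ.filter fun y : M => (x, y) ∈ B ∨ (y, x) ∈ B).card = ζ)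
    (μ : ℝ) (hμ : 0 < μ)
    (bu : {p // p ∈ B} → ((M ⊕ ({p // p ∈ B} ⊕ {p // p ∈ B})) → ℝ))
    (hbu : ∀ p : {p // p ∈ B}, bu p =
      Pi.single (Sum.inr (Sum.inl p)) (1 : ℝ)
        - μ • (Pi.single (Sum.inl (p : M × M).1) (1 : ℝ)
            + Pi.single (Sum.inl (p : M × M).2) (1 : ℝ)))
    (bbar : {p // p ∈ B} → ((M ⊕ ({p // p ∈ B} ⊕ {p // p ∈ B})) → ℝ))
    (hbbar : ∀ p : {p // p ∈ B}, bbar p =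
      Pi.single (Sum.inr (Sum.inr p)) (1 : ℝ)
        + μ • (Pi.single (Sum.inl (p : M × M).1) (1 : ℝ)
            - Pi.single (Sum.inl (p : M × M).2) (1 : ℝ)))
    (Nb : Matrix (M ⊕ ({p // p ∈ B} ⊕ {p // p ∈ B}))
                 (M ⊕ ({p // p ∈ B} ⊕ {p // p ∈ B})) ℝ)
    (hNb : Nb = ∑ p : {p // p ∈ B},
      (Matrix.vecMulVec (bu p) (bu p) + Matrix.vecMulVec (bbar p) (bbar p))) :
    Nb.charpoly = Polynomial.X ^ (Fintype.card M)
      * (Polynomial.X - Polynomial.C (1 : ℝ)) ^ ((ζ - 1) * Fintype.card M)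
      * (Polynomial.X - Polynomial.C (1 + 2 * (ζ : ℝ) * μ ^ 2)) ^ (Fintype.card M) := by
  classical
  set a : ℝ := 2 * (ζ : ℝ) * μ ^ 2 with ha
  -- ## Counting lemmas
  have cards : ∀ x : M,
      ((B.filter fun p => x = p.1).card + (B.filter fun p => x = p.2).card) = ζ := by
    intro x
    rw [← hreg x]
    have hsplit : (Finset.univ.filter fun y : M => (x, y) ∈ B ∨ (y, x) ∈ B)
        = (Finset.univ.filter fun y : M => (x, y) ∈ B)
          ∪ (Finset.univ.filter fun y : M => (y, x) ∈ B) := Finset.filter_or _ _ _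
    have hdisj : Disjoint (Finset.univ.filter fun y : M => (x, y) ∈ B)
        (Finset.univ.filter fun y : M => (y, x) ∈ B) := by
      rw [Finset.disjoint_left]
      intro y hy hy'
      simp only [Finset.mem_filter] at hy hy'
      exact hasym (y, x) hy'.2 hy.2
    rw [hsplit, Finset.card_union_of_disjoint hdisj]
    congr 1
    · refine Finset.card_bij' (fun p _ => p.2) (fun y _ => (x, y)) ?_ ?_ ?_ ?_
      · intro p hp
        simp only [Finset.mem_filter] at hp ⊢
        refine ⟨Finset.mem_univ _, ?_⟩
        have : (x, p.2) = p := by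
          rw [hp.2]
        rw [this]; exact hp.1
      · intro y hy
        simp only [Finset.mem_filter] at hy ⊢
        exact ⟨hy.2, trivial⟩
      · intro p hp
        simp only [Finset.mem_filter] at hp
        show (x, p.2) = p
        exact Prod.ext hp.2 rfl
      · intro y _
        rfl
    · refine Finset.card_bij' (fun p _ => p.1) (fun y _ => (y, x)) ?_ ?_ ?_ ?_
      · intro p hp
        simp only [Finset.mem_filter] at hp ⊢
        refine ⟨Finset.mem_univ _, ?_⟩
        have : (p.1, x) = p := by
          rw [hp.2]
        rw [this]; exact hp.1
      · intro y hy
        simp only [Finset.mem_filter] at hy ⊢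
        exact ⟨hy.2, trivial⟩
      · intro p hp
        simp only [Finset.mem_filter] at hp
        show (p.1, x) = p
        exact Prod.ext rfl hp.2
      · intro y _
        rfl
  -- handshake: 2|B| = ζ|M|
  have hand : 2 * B.card = ζ * Fintype.card M := by
    have h1 : B.card = ∑ x : M, (B.filter fun p => x = p.1).card := by
      have := Finset.card_eq_sum_card_fiberwise
        (f := fun p : M × M => p.1) (s := B) (t := Finset.univ)
        (fun p _ => Finset.mem_univ _)
      rw [this]
      refine Finset.sum_congr rfl fun x _ => ?_
      congr 1
      exact Finset.filter_congr fun p _ => by simp [eq_comm]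
    have h2 : B.card = ∑ x : M, (B.filter fun p => x = p.2).card := by
      have := Finset.card_eq_sum_card_fiberwise
        (f := fun p : M × M => p.2) (s := B) (t := Finset.univ)
        (fun p _ => Finset.mem_univ _)
      rw [this]
      refine Finset.sum_congr rfl fun x _ => ?_
      congr 1
      exact Finset.filter_congr fun p _ => by simp [eq_comm]
    calc 2 * B.card = B.card + B.card := by ring
      _ = ∑ x : M, ((B.filter fun p => x = p.1).card + (B.filter fun p => x = p.2).card) := by
          rw [Finset.sum_add_distrib, ← h1, ← h2]
      _ = ∑ _x : M, ζ := Finset.sum_congr rfl fun x _ => cards x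
      _ = ζ * Fintype.card M := by
          rw [Finset.sum_const, smul_eq_mul, mul_comm, Finset.card_univ]
  -- ## pointwise values of the b-vectors
  have hbu_inl : ∀ (p : {p // p ∈ B}) (x : M), bu p (Sum.inl x)
      = -μ * ((if x = (p : M × M).1 then (1:ℝ) else 0) + (if x = (p : M × M).2 then (1:ℝ) else 0)) := by
    intro p x
    rw [hbu]
    simp [Pi.single_apply]
    all_goals (split_ifs <;> ring)
  have hbbar_inl : ∀ (p : {p // p ∈ B}) (x : M), bbar p (Sum.inl x)
      = μ * ((if x = (p : M × M).1 then (1:ℝ) else 0) - (if x = (p : M × M).2 then (1:ℝ) else 0)) := by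
    intro p x
    rw [hbbar]
    simp [Pi.single_apply]
    all_goals (split_ifs <;> ring)
  have hbu_inr : ∀ (p : {p // p ∈ B}) (d : {p // p ∈ B} ⊕ {p // p ∈ B}), bu p (Sum.inr d)
      = if d = Sum.inl p then (1:ℝ) else 0 := by
    intro p d
    rw [hbu]
    simp [Pi.single_apply]
  have hbbar_inr : ∀ (p : {p // p ∈ B}) (d : {p // p ∈ B} ⊕ {p // p ∈ B}), bbar p (Sum.inr d)
      = if d = Sum.inr p then (1:ℝ) else 0 := by
    intro p d
    rw [hbbar]
    simp [Pi.single_apply]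
  -- ## the key Gram computation on M-sites
  have key : ∀ x x' : M, (∑ p : {p // p ∈ B},
      (bu p (Sum.inl x) * bu p (Sum.inl x') + bbar p (Sum.inl x) * bbar p (Sum.inl x')))
      = if x = x' then a else 0 := by
    intro x x'
    have hterm : ∀ p : {p // p ∈ B},
        bu p (Sum.inl x) * bu p (Sum.inl x') + bbar p (Sum.inl x) * bbar p (Sum.inl x')
        = 2 * μ ^ 2 * ((if x = (p : M × M).1 then (1:ℝ) else 0) * (if x' = (p : M × M).1 then (1:ℝ) else 0)
            + (if x = (p : M × M).2 then (1:ℝ) else 0) * (if x' = (p : M × M).2 then (1:ℝ) else 0)) := by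
      intro p
      rw [hbu_inl, hbu_inl, hbbar_inl, hbbar_inl]
      ring
    rw [Finset.sum_congr rfl fun p _ => hterm p, ← Finset.mul_sum]
    by_cases hxx : x = x'
    · subst hxx
      rw [if_pos rfl]
      have hsq : ∀ p : {p // p ∈ B},
          ((if x = (p : M × M).1 then (1:ℝ) else 0) * (if x = (p : M × M).1 then (1:ℝ) else 0)
            + (if x = (p : M × M).2 then (1:ℝ) else 0) * (if x = (p : M × M).2 then (1:ℝ) else 0))
          = ((if x = (p : M × M).1 then (1:ℝ) else 0) + (if x = (p : M × M).2 then (1:ℝ) else 0)) := by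
        intro p
        all_goals (split_ifs <;> ring)
      rw [Finset.sum_congr rfl fun p _ => hsq p]
      have hcnt : (∑ p : {p // p ∈ B},
          ((if x = (p : M × M).1 then (1:ℝ) else 0) + (if x = (p : M × M).2 then (1:ℝ) else 0)))
          = (ζ : ℝ) := by
        rw [Finset.sum_add_distrib]
        have e1 : (∑ p : {p // p ∈ B}, (if x = (p : M × M).1 then (1:ℝ) else 0))
            = ((B.filter fun p => x = p.1).card : ℝ) := by
          rw [← Finset.sum_boole, ← Finset.sum_coe_sort B (fun p => if x = p.1 then (1:ℝ) else 0)]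
        have e2 : (∑ p : {p // p ∈ B}, (if x = (p : M × M).2 then (1:ℝ) else 0))
            = ((B.filter fun p => x = p.2).card : ℝ) := by
          rw [← Finset.sum_boole, ← Finset.sum_coe_sort B (fun p => if x = p.2 then (1:ℝ) else 0)]
        rw [e1, e2, ← Nat.cast_add, cards x]
      rw [hcnt, ha]
      ring
    · rw [if_neg hxx]
      have hz : ∀ p : {p // p ∈ B},
          ((if x = (p : M × M).1 then (1:ℝ) else 0) * (if x' = (p : M × M).1 then (1:ℝ) else 0)
            + (if x = (p : M × M).2 then (1:ℝ) else 0) * (if x' = (p : M × M).2 then (1:ℝ) else 0)) = 0 := by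
        intro p
        by_cases h1 : x = (p : M × M).1
        · rw [if_pos h1, if_neg (fun h' : x' = (p : M × M).1 => hxx (h1.trans h'.symm))]
          have h2 : x ≠ (p : M × M).2 := fun h => hirr (p : M × M) p.2 (h1.symm.trans h)
          rw [if_neg h2]
          ring
        · rw [if_neg h1]
          by_cases h2 : x = (p : M × M).2
          · rw [if_pos h2, if_neg (fun h' : x' = (p : M × M).2 => hxx (h2.trans h'.symm))]
            ring
          · rw [if_neg h2]
            ring
      rw [Finset.sum_congr rfl fun p _ => hz p, Finset.sum_const, smul_zero, mul_zero]
  -- ## block structure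
  set N : Matrix ({p // p ∈ B} ⊕ {p // p ∈ B}) M ℝ :=
    Matrix.of (fun d x => Sum.elim (fun p => bu p (Sum.inl x)) (fun p => bbar p (Sum.inl x)) d)
    with hNdef
  have hNl : ∀ (p : {p // p ∈ B}) (x : M), N (Sum.inl p) x = bu p (Sum.inl x) := fun _ _ => rfl
  have hNr : ∀ (p : {p // p ∈ B}) (x : M), N (Sum.inr p) x = bbar p (Sum.inl x) := fun _ _ => rfl
  have hblk : Nb = Matrix.fromBlocks (a • (1 : Matrix M M ℝ)) Nᵀ N 1 := by
    rw [hNb]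
    ext i j
    rcases i with x | d <;> rcases j with x' | d'
    · simp only [Matrix.sum_apply, Matrix.add_apply, Matrix.vecMulVec_apply,
        Matrix.fromBlocks_apply₁₁, Matrix.smul_apply, Matrix.one_apply, smul_eq_mul,
        mul_ite, mul_one, mul_zero]
      exact key x x'
    · rcases d' with q | q
      · simp only [Matrix.sum_apply, Matrix.add_apply, Matrix.vecMulVec_apply,
          Matrix.fromBlocks_apply₁₂, Matrix.transpose_apply, hNl,
          hbu_inr, hbbar_inr]
        simp [Finset.sum_ite_eq, Sum.inl.injEq]
      · simp only [Matrix.sum_apply, Matrix.add_apply, Matrix.vecMulVec_apply,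
          Matrix.fromBlocks_apply₁₂, Matrix.transpose_apply, hNr,
          hbu_inr, hbbar_inr]
        simp [Finset.sum_ite_eq, Sum.inr.injEq]
    · rcases d with q | q
      · simp only [Matrix.sum_apply, Matrix.add_apply, Matrix.vecMulVec_apply,
          Matrix.fromBlocks_apply₂₁, hNl, hbu_inr, hbbar_inr]
        simp [Finset.sum_ite_eq, Sum.inl.injEq]
      · simp only [Matrix.sum_apply, Matrix.add_apply, Matrix.vecMulVec_apply,
          Matrix.fromBlocks_apply₂₁, hNr, hbu_inr, hbbar_inr]
        simp [Finset.sum_ite_eq, Sum.inr.injEq]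
    · rcases d with q | q <;> rcases d' with q' | q' <;>
      · simp only [Matrix.sum_apply, Matrix.add_apply, Matrix.vecMulVec_apply,
          Matrix.fromBlocks_apply₂₂, hbu_inr, hbbar_inr]
        by_cases h : q = q' <;> simp [Matrix.one_apply, h, Finset.sum_ite_eq]
  have hNtN : Nᵀ * N = a • (1 : Matrix M M ℝ) := by
    ext x x'
    rw [Matrix.mul_apply]
    have : (∑ d : {p // p ∈ B} ⊕ {p // p ∈ B}, Nᵀ x d * N d x')
        = ∑ p : {p // p ∈ B},
            (bu p (Sum.inl x) * bu p (Sum.inl x') + bbar p (Sum.inl x) * bbar p (Sum.inl x')) := by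
      rw [Fintype.sum_sum_type, ← Finset.sum_add_distrib]
      rfl
    rw [this, key x x']
    simp [Matrix.one_apply]
  -- ## determinant over the fraction field of ℝ[X]
  have hinj : Function.Injective (algebraMap (Polynomial ℝ) (RatFunc ℝ)) :=
    RatFunc.algebraMap_injective ℝ
  set φ : Polynomial ℝ →+* RatFunc ℝ := algebraMap (Polynomial ℝ) (RatFunc ℝ) with hφ
  set ψ : ℝ →+* (RatFunc ℝ) := φ.comp Polynomial.C with hψ
  set xk : (RatFunc ℝ) := φ Polynomial.X with hxk
  have hψa : ∀ c : ℝ, ψ c = φ (Polynomial.C c) := fun c => rfl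
  have hx1 : xk - 1 ≠ 0 := by
    intro h
    have h2 : φ (Polynomial.X - Polynomial.C 1) = 0 := by
      rw [map_sub, Polynomial.C_1, _root_.map_one, ← hxk, h]
    exact Polynomial.X_sub_C_ne_zero (1 : ℝ) (hinj (h2.trans (map_zero φ).symm))
  have e11 : (Matrix.charmatrix (a • (1 : Matrix M M ℝ))).map φ
      = (xk - ψ a) • (1 : Matrix M M (RatFunc ℝ)) := aux_charmatrix_smul_one_map φ a
  have e22 : (Matrix.charmatrix
        (1 : Matrix ({p // p ∈ B} ⊕ {p // p ∈ B}) ({p // p ∈ B} ⊕ {p // p ∈ B}) ℝ)).map φ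
      = (xk - 1) • 1 := by
    have h := aux_charmatrix_smul_one_map (I := {p // p ∈ B} ⊕ {p // p ∈ B}) φ 1
    rw [one_smul, Polynomial.C_1, _root_.map_one] at h
    exact h
  have e12 : ((-(Nᵀ.map Polynomial.C)).map φ) = -((N.map ψ)ᵀ) := by
    ext i j
    simp [hψa]
  have e21 : ((-(N.map Polynomial.C)).map φ) = -(N.map ψ) := by
    ext i j
    simp [hψa]
  have hchar : (Matrix.charmatrix Nb).map φ
      = Matrix.fromBlocks ((xk - ψ a) • 1) (-((N.map ψ)ᵀ)) (-(N.map ψ)) ((xk - 1) • 1) := by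
    rw [hblk, Matrix.charmatrix_fromBlocks, Matrix.fromBlocks_map, e11, e22, e12, e21]
  have hDmul : ((xk - 1) • (1 : Matrix ({p // p ∈ B} ⊕ {p // p ∈ B}) ({p // p ∈ B} ⊕ {p // p ∈ B}) (RatFunc ℝ)))
      * ((xk - 1)⁻¹ • 1) = 1 := by
    rw [Matrix.smul_mul, Matrix.mul_smul, one_mul, smul_smul, mul_inv_cancel₀ hx1, one_smul]
  haveI : Invertible ((xk - 1) • (1 : Matrix ({p // p ∈ B} ⊕ {p // p ∈ B}) ({p // p ∈ B} ⊕ {p // p ∈ B}) (RatFunc ℝ))) :=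
    invertibleOfRightInverse _ _ hDmul
  have hinvOf : ⅟((xk - 1) • (1 : Matrix ({p // p ∈ B} ⊕ {p // p ∈ B}) ({p // p ∈ B} ⊕ {p // p ∈ B}) (RatFunc ℝ)))
      = (xk - 1)⁻¹ • 1 := invOf_eq_right_inv hDmul
  have hAtA : (N.map ψ)ᵀ * (N.map ψ) = ψ a • (1 : Matrix M M (RatFunc ℝ)) := by
    rw [← Matrix.transpose_map, ← Matrix.map_mul, hNtN, aux_smul_one_map]
  have hmid : (-((N.map ψ)ᵀ)) * ((xk - 1)⁻¹ • (1 : Matrix ({p // p ∈ B} ⊕ {p // p ∈ B}) ({p // p ∈ B} ⊕ {p // p ∈ B}) (RatFunc ℝ)))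
      * (-(N.map ψ)) = ((xk - 1)⁻¹ * ψ a) • (1 : Matrix M M (RatFunc ℝ)) := by
    rw [Matrix.mul_smul, Matrix.mul_one, Matrix.smul_mul, Matrix.neg_mul, Matrix.mul_neg,
      neg_neg, hAtA, smul_smul]
  have hdet : φ Nb.charpoly
      = (xk - 1) ^ (Fintype.card ({p // p ∈ B} ⊕ {p // p ∈ B}))
        * (xk - ψ a - (xk - 1)⁻¹ * ψ a) ^ (Fintype.card M) := by
    have h0 : Nb.charpoly = (Matrix.charmatrix Nb).det := rfl
    rw [h0, RingHom.map_det]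
    show ((Matrix.charmatrix Nb).map φ).det = _
    rw [hchar, Matrix.det_fromBlocks₂₂, hinvOf, hmid, ← sub_smul,
      Matrix.det_smul, Matrix.det_smul, Matrix.det_one, mul_one, Matrix.det_one, mul_one]
  have hexp : Fintype.card ({p // p ∈ B} ⊕ {p // p ∈ B})
      = (ζ - 1) * Fintype.card M + Fintype.card M := by
    have hc : Fintype.card ({p // p ∈ B} ⊕ {p // p ∈ B}) = 2 * B.card := by
      rw [Fintype.card_sum, Fintype.card_coe, two_mul]
    rw [hc, hand]
    obtain ⟨k, rfl⟩ := Nat.exists_eq_add_of_le hζ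
    have h1 : 1 + k - 1 = k := by omega
    rw [h1]
    ring
  have hfield : (xk - 1) ^ ((ζ - 1) * Fintype.card M + Fintype.card M)
      * (xk - ψ a - (xk - 1)⁻¹ * ψ a) ^ (Fintype.card M)
      = xk ^ (Fintype.card M) * (xk - 1) ^ ((ζ - 1) * Fintype.card M)
        * (xk - (1 + ψ a)) ^ (Fintype.card M) := by
    rw [pow_add, mul_assoc, ← mul_pow]
    have hin : (xk - 1) * (xk - ψ a - (xk - 1)⁻¹ * ψ a) = xk * (xk - (1 + ψ a)) := by
      field_simp
      ring
    rw [hin, mul_pow]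
    ring
  have hφR : φ (Polynomial.X ^ (Fintype.card M)
        * (Polynomial.X - Polynomial.C (1 : ℝ)) ^ ((ζ - 1) * Fintype.card M)
        * (Polynomial.X - Polynomial.C (1 + a)) ^ (Fintype.card M))
      = xk ^ (Fintype.card M) * (xk - 1) ^ ((ζ - 1) * Fintype.card M)
        * (xk - (1 + ψ a)) ^ (Fintype.card M) := by
    rw [_root_.map_mul, _root_.map_mul, map_pow, map_pow, map_pow, _root_.map_sub, _root_.map_sub,
      Polynomial.C_1, _root_.map_one, Polynomial.C_add, _root_.map_add, Polynomial.C_1,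
      _root_.map_one, ← hxk, hψa]
  refine hinj ?_
  rw [hdet, hexp, hfield, ← hφR]
end

section
/- Let m := ⌊(L−1)/2⌋ and let N be an integer with 1 ≤ N ≤ m². Let λ₁ ≤ λ₂ ≤ ⋯ ≤ λ_{L²} be the eigenvalues of the Hermitian matrix T listed in increasing order with multiplicity. Then the sum of the N largest eigenvalues satisfies Σ_{j = L²−N+1}^{L²} λ_j ≥ 6tN − 12π² t N² / L². (This is the rigorous form of the free-electron energy estimate E_ferro ≤ −6t N_h + 6πt |M| (N_h/|M|)² used in the proof of saturated ferromagnetism.) -/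
/-!
The hopping matrix is translation invariant, so the plane waves
`x ↦ exp (2πi (p₁x₁ + p₂x₂) / L)` diagonalise it and its spectrum is the dispersion `ε(p)`.
By `1 - θ²/2 ≤ cos θ`, each of the `(s + 1)² ≥ N` modes `(a, -b)` with `0 ≤ a, b ≤ s`,
`s = ⌊√(N - 1)⌋`, has `ε ≥ 2t(3 - 6π²s²/L²) ≥ 6t - 12π²tN/L²`. So at least `N` eigenvalues lie
above this bound, hence so do the `N` largest ones.
-/

open Polynomial Finset Real

theorem Polynomial.roots_prod_X_sub_C_apply {R ι : Type*} [CommRing R] [IsDomain R]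
    (s : Finset ι) (u : ι → R) : (∏ i ∈ s, (X - C (u i))).roots = s.val.map u := by
  rw [← roots_multiset_prod_X_sub_C (s.val.map u), Multiset.map_map]
  rfl

theorem card_filter_eq_of_prod_X_sub_C_eq {ι κ : Type*} [Fintype ι] [Fintype κ] {f : ι → ℝ}
    {g : κ → ℝ} (h : ∏ i, (X - C (f i : ℂ)) = ∏ j, (X - C (g j : ℂ))) (P : ℝ → Prop)
    [DecidablePred P] : #{i | P (f i)} = #{j | P (g j)} := by
  have hmap : univ.val.map f = univ.val.map g := by
    apply Multiset.map_injective Complex.ofReal_injective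
    have := congrArg roots h
    rw [roots_prod_X_sub_C_apply, roots_prod_X_sub_C_apply] at this
    rwa [Multiset.map_map, Multiset.map_map]
  have hcount := congrArg (Multiset.countP P) hmap
  rwa [Multiset.countP_map, Multiset.countP_map] at hcount

theorem Fin.card_filter_sub_le_val {n N : ℕ} (h : N ≤ n) :
    #{j : Fin n | n - N ≤ (j : ℕ)} = N := by
  have := card_filter_add_card_filter_not (s := (univ : Finset (Fin n)))
    (fun j : Fin n => (j : ℕ) < n - N)
  simp only [not_lt, Fin.card_filter_val_lt, card_univ, Fintype.card_fin] at this
  omega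

theorem Monotone.card_nsmul_le_sum_filter_sub_le {M : Type*} [AddCommMonoid M] [LinearOrder M]
    [IsOrderedAddMonoid M] {n N : ℕ} {f : Fin n → M} (hf : Monotone f) {b : M}
    (hN : N ≤ #{j | b ≤ f j}) :
    N • b ≤ ∑ j ∈ univ.filter (fun j : Fin n => n - N ≤ (j : ℕ)), f j := by
  have hNn : N ≤ n := hN.trans ((card_filter_le _ _).trans_eq (by simp))
  have htop : ∀ j : Fin n, n - N ≤ (j : ℕ) → b ≤ f j := by
    intro j hj
    by_contra! hfj
    have hsub : ({i | b ≤ f i} : Finset (Fin n)) ⊆ Ioi j := fun i hi => by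
      simp only [mem_filter, mem_univ, true_and] at hi
      exact mem_Ioi.mpr (lt_of_not_ge fun hij => (hfj.trans_le' (hf hij)).not_ge hi)
    have := hN.trans (card_le_card hsub)
    rw [Fin.card_Ioi] at this
    omega
  calc N • b = #{j : Fin n | n - N ≤ (j : ℕ)} • b := by rw [Fin.card_filter_sub_le_val hNn]
    _ ≤ _ := card_nsmul_le_sum _ _ _ fun j hj => htop j (mem_filter.mp hj).2

theorem Matrix.charpoly_eq_prod_addChar_of_apply_eq_sub {G : Type*} [AddCommGroup G] [Fintype G]
    [DecidableEq G] (T : Matrix G G ℂ) (f : G → ℂ) (hT : ∀ x y, T x y = f (y - x)) :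
    T.charpoly = ∏ ψ : AddChar G ℂ, (X - C (∑ d, f d * ψ d)) := by
  have heig : ∀ ψ : AddChar G ℂ, T.toLin' ψ = (∑ d, f d * ψ d) • ⇑ψ := by
    intro ψ
    ext x
    simp only [Matrix.toLin'_apply, Matrix.mulVec, dotProduct, hT, Pi.smul_apply, smul_eq_mul,
      sum_mul]
    exact Fintype.sum_equiv (Equiv.subRight x) _ _ fun y => by
      simp [mul_assoc, ← AddChar.map_add_eq_mul]
  have hdiag : LinearMap.toMatrix (AddChar.complexBasis G) (AddChar.complexBasis G) T.toLin' =
      Matrix.diagonal fun ψ => ∑ d, f d * ψ d := by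
    ext ψ φ
    rw [LinearMap.toMatrix_apply, AddChar.complexBasis_apply, heig, map_smul,
      ← AddChar.complexBasis_apply, Module.Basis.repr_self, Matrix.diagonal_apply]
    by_cases h : ψ = φ <;> simp [h]
  rw [← Matrix.charpoly_toLin', ← LinearMap.charpoly_toMatrix _ (AddChar.complexBasis G), hdiag,
    Matrix.charpoly_diagonal]

namespace ZMod

variable {L : ℕ} [NeZero L]

theorem stdAddChar_add_stdAddChar_neg (a : ZMod L) :
    stdAddChar a + stdAddChar (-a) = 2 * ((cos (2 * π * a.val / L) : ℝ) : ℂ) := by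
  rw [AddChar.map_neg_eq_conj, Complex.add_conj, stdAddChar_apply, toCircle_apply]
  have : 2 * π * Complex.I * a.val / L = ((2 * π * a.val / L : ℝ) : ℂ) * Complex.I := by
    push_cast; ring
  rw [this, Complex.exp_ofReal_mul_I_re, Complex.ofReal_mul, Complex.ofReal_ofNat]

theorem one_sub_le_cos_two_pi_mul_val_intCast_div (z : ℤ) :
    1 - 2 * π ^ 2 * z ^ 2 / L ^ 2 ≤ cos (2 * π * (z : ZMod L).val / L) := by
  have hL : (L : ℝ) ≠ 0 := Nat.cast_ne_zero.mpr (NeZero.ne L)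
  have hval : ((z : ZMod L).val : ℝ) = z - L * (z / (L : ℤ) : ℤ) := by
    have := val_intCast (n := L) z
    rw [Int.emod_def] at this
    exact_mod_cast this
  have hcos : cos (2 * π * (z : ZMod L).val / L) = cos (2 * π * z / L) := by
    rw [hval, ← cos_sub_int_mul_two_pi (2 * π * z / L) (z / (L : ℤ))]
    congr 1
    field_simp
  rw [hcos]
  calc 1 - 2 * π ^ 2 * z ^ 2 / L ^ 2 = 1 - (2 * π * z / L) ^ 2 / 2 := by field_simp
    _ ≤ _ := one_sub_sq_div_two_le_cos

end ZMod

section TriangularLattice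

variable {L : ℕ} [NeZero L]

variable (L) in
noncomputable def planeWave (p : ZMod L × ZMod L) : AddChar (ZMod L × ZMod L) ℂ :=
  ZMod.stdAddChar.compAddMonoidHom
    ((AddMonoidHom.mulLeft p.1).comp (AddMonoidHom.fst _ _) +
      (AddMonoidHom.mulLeft p.2).comp (AddMonoidHom.snd _ _))

theorem planeWave_apply (p x : ZMod L × ZMod L) :
    planeWave L p x = ZMod.stdAddChar (p.1 * x.1 + p.2 * x.2) := rfl

theorem planeWave_bijective : Function.Bijective (planeWave L) := by
  refine (Fintype.bijective_iff_injective_and_card _).mpr ⟨fun p q h => ?_, by simp⟩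
  have h1 := DFunLike.congr_fun h (1, 0)
  have h2 := DFunLike.congr_fun h (0, 1)
  simp only [planeWave_apply, mul_one, mul_zero, add_zero, zero_add] at h1 h2
  exact Prod.ext (ZMod.injective_stdAddChar h1) (ZMod.injective_stdAddChar h2)

variable (L) in
def triangularHopping (t : ℝ) (d : ZMod L × ZMod L) : ℂ :=
  if d = (1, 0) ∨ d = (-1, 0) ∨ d = (0, 1) ∨ d = (0, -1) ∨ d = (1, 1) ∨ d = (-1, -1) then t
  else 0

variable (L) in
noncomputable def triangularDispersion (t : ℝ) (p : ZMod L × ZMod L) : ℝ :=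
  2 * t * (cos (2 * π * p.1.val / L) + cos (2 * π * p.2.val / L) +
    cos (2 * π * (p.1 + p.2).val / L))

theorem sum_triangularHopping_mul_planeWave (hL : 3 ≤ L) (t : ℝ) (p : ZMod L × ZMod L) :
    ∑ d, triangularHopping L t d * planeWave L p d = triangularDispersion L t p := by
  have : Fact (2 < L) := ⟨hL⟩
  have : Fact (1 < L) := ⟨by omega⟩
  have h10 : (1 : ZMod L) ≠ 0 := one_ne_zero
  have h1m1 : (1 : ZMod L) ≠ -1 := ZMod.neg_one_ne_one.symm
  have hm10 : (-1 : ZMod L) ≠ 0 := neg_ne_zero.mpr h10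
  have hD : univ.filter (fun d : ZMod L × ZMod L => d = (1, 0) ∨ d = (-1, 0) ∨ d = (0, 1) ∨
      d = (0, -1) ∨ d = (1, 1) ∨ d = (-1, -1)) =
      {(1, 0), (-1, 0), (0, 1), (0, -1), (1, 1), (-1, -1)} := by
    ext d; simp
  simp only [triangularHopping, ite_mul, zero_mul, ← sum_filter, hD]
  simp only [planeWave_apply, mem_insert, Prod.ext_iff, h1m1, and_true, h10, h10.symm, and_self,
    hm10.symm, and_false, mem_singleton, or_self, not_false_eq_true, sum_insert, mul_one, mul_zero,
    add_zero, hm10, h1m1.symm, mul_neg, zero_add, sum_singleton]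
  rw [← neg_add, triangularDispersion]
  simp only [Complex.ofReal_mul, Complex.ofReal_add, Complex.ofReal_ofNat]
  linear_combination (t : ℂ) * (ZMod.stdAddChar_add_stdAddChar_neg p.1 +
    ZMod.stdAddChar_add_stdAddChar_neg p.2 + ZMod.stdAddChar_add_stdAddChar_neg (p.1 + p.2))

theorem charpoly_eq_prod_triangularDispersion (hL : 3 ≤ L) (t : ℝ)
    (T : Matrix (ZMod L × ZMod L) (ZMod L × ZMod L) ℂ)
    (hT : ∀ x y, T x y = triangularHopping L t (y - x)) :
    T.charpoly = ∏ p, (X - C (triangularDispersion L t p : ℂ)) := by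
  rw [Matrix.charpoly_eq_prod_addChar_of_apply_eq_sub T (triangularHopping L t) hT,
    ← planeWave_bijective.prod_comp]
  simp only [sum_triangularHopping_mul_planeWave hL]

theorem triangularDispersion_intCast_ge {t : ℝ} (ht : 0 ≤ t) (a b : ℤ) :
    2 * t * (3 - 2 * π ^ 2 * (a ^ 2 + b ^ 2 + (a + b) ^ 2) / L ^ 2) ≤
      triangularDispersion L t ((a : ZMod L), (b : ZMod L)) := by
  rw [triangularDispersion]
  refine mul_le_mul_of_nonneg_left ?_ (by positivity)
  have := add_le_add (add_le_add (ZMod.one_sub_le_cos_two_pi_mul_val_intCast_div (L := L) a)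
    (ZMod.one_sub_le_cos_two_pi_mul_val_intCast_div (L := L) b))
    (ZMod.one_sub_le_cos_two_pi_mul_val_intCast_div (L := L) (a + b))
  push_cast at this ⊢
  linear_combination this

-- Modes `(a, -b)` with `0 ≤ a, b ≤ s` keep all three phases `a`, `-b`, `a - b` of size `≤ s`.
theorem triangularDispersion_natCast_neg_natCast_ge {t : ℝ} (ht : 0 ≤ t) {s a b : ℕ}
    (ha : a ≤ s) (hb : b ≤ s) :
    2 * t * (3 - 2 * π ^ 2 * (3 * s ^ 2) / L ^ 2) ≤
      triangularDispersion L t ((a : ZMod L), -(b : ZMod L)) := by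
  have hphases : (a : ℝ) ^ 2 + (-b : ℝ) ^ 2 + (a + -b : ℝ) ^ 2 ≤ 3 * s ^ 2 := by
    have ha' : (a : ℝ) ≤ s := by exact_mod_cast ha
    have hb' : (b : ℝ) ≤ s := by exact_mod_cast hb
    nlinarith [Nat.cast_nonneg (α := ℝ) a, Nat.cast_nonneg (α := ℝ) b]
  have := triangularDispersion_intCast_ge (L := L) ht a (-b)
  push_cast at this
  refine le_trans ?_ this
  gcongr

theorem sq_succ_le_card_filter_le_triangularDispersion {t : ℝ} (ht : 0 ≤ t) {s : ℕ}
    (hs : s < L) : (s + 1) ^ 2 ≤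
      #{p | 2 * t * (3 - 2 * π ^ 2 * (3 * s ^ 2) / L ^ 2) ≤ triangularDispersion L t p} := by
  have hcast : Set.InjOn (fun a : ℕ => (a : ZMod L)) (range (s + 1)) := fun a ha a' ha' h => by
    simp only [coe_range, Set.mem_Iio] at ha ha'
    simpa [ZMod.val_cast_of_lt (ha.trans_le hs), ZMod.val_cast_of_lt (ha'.trans_le hs)] using
      congrArg ZMod.val h
  calc (s + 1) ^ 2 = #(range (s + 1) ×ˢ range (s + 1)) := by simp [sq]
    _ ≤ _ := by
      refine card_le_card_of_injOn (fun q => ((q.1 : ZMod L), -(q.2 : ZMod L))) ?_ ?_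
      · intro q hq
        simp only [coe_product, coe_range, Set.mem_prod, Set.mem_Iio, Nat.lt_succ_iff] at hq
        simpa using triangularDispersion_natCast_neg_natCast_ge ht hq.1 hq.2
      · intro q hq q' hq' h
        simp only [coe_product, Set.mem_prod, Prod.mk.injEq, neg_inj] at hq hq' h
        exact Prod.ext (hcast hq.1 hq'.1 h.1) (hcast hq.2 hq'.2 h.2)

end TriangularLattice

theorem sum_largest_eigenvalues_triangular_bound_general
    (L : ℕ) [NeZero L] (t : ℝ) (ht : 0 < t)
    (T : Matrix (ZMod L × ZMod L) (ZMod L × ZMod L) ℂ)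
    (hT : ∀ x y : ZMod L × ZMod L,
      T x y = if (y - x = (1, 0) ∨ y - x = (-1, 0) ∨ y - x = (0, 1) ∨
                  y - x = (0, -1) ∨ y - x = (1, 1) ∨ y - x = (-1, -1))
              then (t : ℂ) else 0)
    (N : ℕ) (hN1 : 1 ≤ N) (hN2 : N ≤ ((L - 1) / 2) ^ 2)
    (lam : Fin (L ^ 2) → ℝ) (hmono : Monotone lam)
    (hchar : T.charpoly =
      ∏ j : Fin (L ^ 2), (Polynomial.X - Polynomial.C ((lam j : ℝ) : ℂ))) :
    6 * t * (N : ℝ) - 12 * Real.pi ^ 2 * t * (N : ℝ) ^ 2 / (L : ℝ) ^ 2 ≤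
      ∑ j ∈ Finset.univ.filter (fun j : Fin (L ^ 2) => L ^ 2 - N ≤ (j : ℕ)), lam j := by
  set s := Nat.sqrt (N - 1)
  have hsN : s ^ 2 ≤ N - 1 := Nat.sqrt_le' (N - 1)
  have hNs : N - 1 < (s + 1) ^ 2 := Nat.lt_succ_sqrt' (N - 1)
  have hsm : s < (L - 1) / 2 := lt_of_pow_lt_pow_left₀ 2 (Nat.zero_le _) (by omega)
  have hL : 3 ≤ L := by omega
  set b := 2 * t * (3 - 2 * π ^ 2 * (3 * s ^ 2) / L ^ 2)
  have hcount : N ≤ #{j | b ≤ lam j} := calc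
    N ≤ (s + 1) ^ 2 := by omega
    _ ≤ #{p | b ≤ triangularDispersion L t p} :=
      sq_succ_le_card_filter_le_triangularDispersion ht.le (by omega)
    _ = #{j | b ≤ lam j} :=
      (card_filter_eq_of_prod_X_sub_C_eq
        (hchar.symm.trans (charpoly_eq_prod_triangularDispersion hL t T hT)) _).symm
  have hsN' : (s : ℝ) ^ 2 ≤ N := by exact_mod_cast hsN.trans (Nat.sub_le N 1)
  calc 6 * t * (N : ℝ) - 12 * π ^ 2 * t * (N : ℝ) ^ 2 / (L : ℝ) ^ 2
      ≤ 6 * t * N - 12 * π ^ 2 * t * (N * s ^ 2) / L ^ 2 := by rw [sq (N : ℝ)]; gcongr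
    _ = N • b := by rw [nsmul_eq_mul]; ring
    _ ≤ _ := hmono.card_nsmul_le_sum_filter_sub_le hcount

/-- Let `λ₁ ≤ ⋯ ≤ λ_{L²}` be the eigenvalues (in increasing order, with multiplicity,
encoded via the characteristic polynomial) of the Hermitian triangular-lattice hopping
matrix `T`.  For `1 ≤ N ≤ ⌊(L-1)/2⌋²`, the sum of the `N` largest eigenvalues is at
least `6tN - 12π²tN²/L²`. -/
theorem sum_largest_eigenvalues_triangular_bound
    (L : ℕ) [NeZero L] (hL : 3 ≤ L) (t : ℝ) (ht : 0 < t)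
    (T : Matrix (ZMod L × ZMod L) (ZMod L × ZMod L) ℂ)
    (hT : ∀ x y : ZMod L × ZMod L,
      T x y = if (y - x = (1, 0) ∨ y - x = (-1, 0) ∨ y - x = (0, 1) ∨
                  y - x = (0, -1) ∨ y - x = (1, 1) ∨ y - x = (-1, -1))
              then (t : ℂ) else 0)
    (hherm : T.IsHermitian)
    (N : ℕ) (hN1 : 1 ≤ N) (hN2 : N ≤ ((L - 1) / 2) ^ 2)
    (lam : Fin (L ^ 2) → ℝ) (hmono : Monotone lam)
    (hchar : T.charpoly =
      ∏ j : Fin (L ^ 2), (Polynomial.X - Polynomial.C ((lam j : ℝ) : ℂ))) :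
    6 * t * (N : ℝ) - 12 * Real.pi ^ 2 * t * (N : ℝ) ^ 2 / (L : ℝ) ^ 2 ≤
      ∑ j ∈ Finset.univ.filter (fun j : Fin (L ^ 2) => L ^ 2 - N ≤ (j : ℕ)), lam j :=
  sum_largest_eigenvalues_triangular_bound_general L t ht T hT N hN1 hN2 lam hmono hchar
end

section
/- For every integer L ≥ 3 and every nonempty subset C ⊆ V with |V ∖ C| ≤ 5, the subgraph of G_L induced on C is connected. (Thus when the number of holes is smaller than the coordination number ζ = 6, every electron configuration is connected; this is the combinatorial core of Theorem 2 for the triangular lattice.) -/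
/-!
Removing the holes one at a time, it suffices that for every hole `z`, any two neighbours of `z`
that are not holes stay connected avoiding all holes: a walk through `z` can then be rerouted
between its two neighbours on the walk. With at most five holes, one of them `z`, such a pair is
connected as soon as it is joined by five internally disjoint paths avoiding `z`: by pigeonhole,
one of the paths carries no hole. Translations and the rotation by `60°` are automorphisms of the
torus, so it is enough to find these paths around the origin from `(1, 0)` to `(0, 1)` and from
`(1, 0)` to `(-1, 0)`. They are explicit: drawn in `ℤ²` inside a `6 × 6` window when `L ≥ 6`, and
wrapping around the torus when `L ≤ 5`.
-/

theorem List.Nodup.countP_mem_le_ncard {V : Type*} [Finite V] {l : List V} (hl : l.Nodup)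
    (H : Set V) [DecidablePred (· ∈ H)] : l.countP (· ∈ H) ≤ H.ncard := by
  classical
  rw [List.countP_eq_length_filter, ← List.toFinset_card_of_nodup (hl.filter _),
    ← Set.ncard_coe_finset]
  exact Set.ncard_le_ncard (by intro x; simp) (Set.toFinite H)

theorem ZMod.intCast_ne_intCast_of_abs_sub_lt {L : ℕ} {x y : ℤ} (hxy : x ≠ y) (h : |x - y| < L) :
    (x : ZMod L) ≠ y := by
  rw [Ne, ZMod.intCast_eq_intCast_iff_dvd_sub]
  intro hdvd
  have := Int.eq_zero_of_abs_lt_dvd hdvd (by rwa [abs_sub_comm])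
  omega

namespace SimpleGraph

variable {V V' : Type*} {G : SimpleGraph V} {G' : SimpleGraph V'}

/-- `G.ReachableIn S u u` holds even when `u ∉ S`. -/
def ReachableIn (G : SimpleGraph V) (S : Set V) : V → V → Prop :=
  Relation.ReflTransGen fun x y => x ∈ S ∧ y ∈ S ∧ G.Adj x y

namespace ReachableIn

variable {S T : Set V} {u v : V}

theorem symm (h : G.ReachableIn S u v) : G.ReachableIn S v u := by
  induction h with
  | refl => exact .refl
  | tail _ hxy ih => exact ih.head ⟨hxy.2.1, hxy.1, hxy.2.2.symm⟩

theorem mono (hST : S ⊆ T) (h : G.ReachableIn S u v) : G.ReachableIn T u v :=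
  Relation.ReflTransGen.mono (fun _ _ ⟨hx, hy, hxy⟩ => ⟨hST hx, hST hy, hxy⟩) _ _ h

theorem map (f : G →g G') {S : Set V'} (h : G.ReachableIn (f ⁻¹' S) u v) :
    G'.ReachableIn S (f u) (f v) :=
  Relation.ReflTransGen.lift f (fun _ _ ⟨hx, hy, hxy⟩ => ⟨hx, hy, f.map_adj hxy⟩) _ _ h

theorem reachable_induce (h : G.ReachableIn S u v) (hu : u ∈ S) (hv : v ∈ S) :
    (G.induce S).Reachable ⟨u, hu⟩ ⟨v, hv⟩ := by
  induction h with
  | refl => rfl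
  | tail _ hxy ih =>
    obtain ⟨hx, _, hxy⟩ := hxy
    exact (ih hx).trans (Adj.reachable (by simpa using hxy))

/-- A walk through `z` is rerouted between the neighbours of `z` just before and after it. -/
theorem of_insert {C : Set V} {z : V}
    (hlink : ∀ a b, G.Adj z a → G.Adj z b → a ∈ C → b ∈ C → G.ReachableIn C a b)
    (hu : u ∈ C) (hv : v ∈ C) (h : G.ReachableIn (insert z C) u v) : G.ReachableIn C u v := by
  suffices key : ∀ w, G.ReachableIn (insert z C) u w →
      (w ∈ C → G.ReachableIn C u w) ∧ (w ∉ C → ∃ a ∈ C, G.Adj z a ∧ G.ReachableIn C u a) from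
    (key v h).1 hv
  intro w huw
  induction huw with
  | refl => exact ⟨fun _ => .refl, fun h => absurd hu h⟩
  | @tail x y _ hxy ih =>
    obtain ⟨hx, hy, hxy⟩ := hxy
    by_cases hxC : x ∈ C <;> by_cases hyC : y ∈ C
    · exact ⟨fun _ => (ih.1 hxC).tail ⟨hxC, hyC, hxy⟩, absurd hyC⟩
    · obtain rfl : y = z := (Set.mem_insert_iff.1 hy).resolve_right hyC
      exact ⟨(absurd · hyC), fun _ => ⟨x, hxC, hxy.symm, ih.1 hxC⟩⟩
    · obtain rfl : x = z := (Set.mem_insert_iff.1 hx).resolve_right hxC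
      obtain ⟨a, haC, hxa, hua⟩ := ih.2 hxC
      exact ⟨fun _ => hua.trans (hlink a y hxa hxy haC hyC), absurd hyC⟩
    · obtain rfl : x = z := (Set.mem_insert_iff.1 hx).resolve_right hxC
      obtain rfl : y = x := (Set.mem_insert_iff.1 hy).resolve_right hyC
      exact absurd hxy (G.loopless.irrefl _)

end ReachableIn

theorem Reachable.reachableIn_univ {u v : V} (h : G.Reachable u v) :
    G.ReachableIn Set.univ u v :=
  Relation.ReflTransGen.mono (fun _ _ hxy => ⟨trivial, trivial, hxy⟩) _ _
    ((reachable_iff_reflTransGen u v).1 h)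

theorem reachableIn_of_isChain {S : Set V} {a b : V} {l : List V}
    (hl : (a :: (l ++ [b])).IsChain G.Adj) (hS : ∀ x ∈ a :: (l ++ [b]), x ∈ S) :
    G.ReachableIn S a b := by
  refine List.relationReflTransGen_of_exists_isChain_cons (l ++ [b])
    (hl.imp_of_mem_imp fun x y hx hy hxy => ⟨hS x hx, hS y hy, hxy⟩) ?_
  simp

/-- Pigeonhole: if the paths from `a` to `b` carry fewer holes in total than there are paths,
one of them carries none. -/
theorem reachableIn_compl_of_countP_lt {H : Set V} [DecidablePred (· ∈ H)] {a b : V}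
    (ls : List (List V)) (hpaths : ∀ l ∈ ls, (a :: (l ++ [b])).IsChain G.Adj)
    (hcount : ls.flatten.countP (· ∈ H) < ls.length) (ha : a ∉ H) (hb : b ∉ H) :
    G.ReachableIn Hᶜ a b := by
  obtain ⟨l, hl, hlH⟩ : ∃ l ∈ ls, ∀ x ∈ l, x ∉ H := by
    by_contra! hmeet
    have : ls.length ≤ ls.flatten.countP (· ∈ H) := by
      rw [List.countP_flatten]
      simpa using List.length_le_sum_of_one_le (ls.map (List.countP (· ∈ H)))
        (by simpa [Nat.one_le_iff_ne_zero, List.countP_eq_zero] using hmeet)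
    omega
  refine reachableIn_of_isChain (hpaths l hl) fun x hx => ?_
  simp only [List.mem_cons, List.mem_append, List.not_mem_nil, or_false] at hx
  rcases hx with rfl | hx | rfl
  exacts [ha, hlH x hx, hb]

def LinkedAround (G : SimpleGraph V) (k : ℕ) (z a b : V) : Prop :=
  ∀ H : Set V, z ∈ H → H.ncard ≤ k → a ∉ H → b ∉ H → G.ReachableIn Hᶜ a b

def NeighborsLinked (G : SimpleGraph V) (k : ℕ) : Prop :=
  ∀ z a b, G.Adj z a → G.Adj z b → G.LinkedAround k z a b

namespace LinkedAround

variable {k : ℕ} {z a b : V}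

theorem symm (h : G.LinkedAround k z a b) : G.LinkedAround k z b a :=
  fun H hz hH hb ha => (h H hz hH ha hb).symm

theorem of_adj (hab : G.Adj a b) : G.LinkedAround k z a b :=
  fun _ _ _ ha hb => .single ⟨ha, hb, hab⟩

theorem map [Finite V'] (f : G ↪g G') (h : G.LinkedAround k z a b) :
    G'.LinkedAround k (f z) (f a) (f b) := by
  intro H hz hH ha hb
  refine ReachableIn.map f.toHom (h (f ⁻¹' H) hz ?_ ha hb)
  exact (Set.ncard_le_ncard_of_injOn f (fun _ hx => hx) f.injective.injOn).trans hH

end LinkedAround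

theorem linkedAround_of_paths [Finite V] {k : ℕ} {z a b : V} (ls : List (List V))
    (hpaths : ∀ l ∈ ls, (a :: (l ++ [b])).IsChain G.Adj) (hnodup : (z :: ls.flatten).Nodup)
    (hk : k ≤ ls.length) : G.LinkedAround k z a b := by
  classical
  intro H hz hH ha hb
  refine reachableIn_compl_of_countP_lt ls hpaths ?_ ha hb
  have := hnodup.countP_mem_le_ncard H
  simp only [List.countP_cons, hz, decide_true, if_true] at this
  omega

theorem reachableIn_compl_of_neighborsLinked [Finite V] {k : ℕ} (hconn : G.Preconnected)
    (hlink : G.NeighborsLinked k) {H : Set V} (hH : H.ncard ≤ k) {u v : V} (hu : u ∉ H)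
    (hv : v ∉ H) : G.ReachableIn Hᶜ u v := by
  induction H, Set.toFinite H using Set.Finite.induction_on generalizing u v with
  | empty =>
    rw [Set.compl_empty]
    exact (hconn u v).reachableIn_univ
  | @insert z H _ _ ih =>
    have hH' : H.ncard ≤ k := (Set.ncard_le_ncard (Set.subset_insert z H)).trans hH
    refine .of_insert (z := z) (fun a b hza hzb ha hb =>
      hlink z a b hza hzb _ (Set.mem_insert z H) hH ha hb) hu hv ?_
    refine (ih hH' (fun h => hu (.inr h)) fun h => hv (.inr h)).mono fun x hx => ?_
    by_cases hxz : x = z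
    · exact .inl hxz
    · exact .inr fun h => hx ((Set.mem_insert_iff.1 h).resolve_left hxz)

theorem connected_induce_of_neighborsLinked [Finite V] {k : ℕ} (hconn : G.Preconnected)
    (hlink : G.NeighborsLinked k) {C : Set V} (hC : C.Nonempty) (hk : Cᶜ.ncard ≤ k) :
    (G.induce C).Connected := by
  have := hC.to_subtype
  refine (connected_iff _).2 ⟨fun ⟨u, hu⟩ ⟨v, hv⟩ => ?_, inferInstance⟩
  have huv := reachableIn_compl_of_neighborsLinked hconn hlink hk (not_not.2 hu) (not_not.2 hv)
  rw [compl_compl] at huv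
  exact huv.reachable_induce hu hv

section addCayley

variable {M N : Type*} [AddGroup M] [AddGroup N] {s : Set M} {t : Set N}

def addCayleyAddLeft (s : Set M) (d : M) : addCayley s ≃g addCayley s :=
  ⟨Equiv.addLeft d, addCayley_adj_add_iff_right⟩

@[simp]
theorem addCayleyAddLeft_apply (d x : M) : addCayleyAddLeft s d x = d + x := rfl

def addCayleyHom (f : M →+ N) (hf : ∀ g ∈ s, f g ∈ t ∨ -f g ∈ t) (ht : (0 : N) ∉ t) :
    addCayley s →g addCayley t where
  toFun := f
  map_rel' {u v} huv := by
    rw [addCayley_adj] at huv ⊢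
    have key : ∀ g, (g ∈ s ∨ -g ∈ s) → f g ∈ t ∨ -f g ∈ t := by
      rintro g (hg | hg)
      · exact hf g hg
      · simpa [or_comm] using hf _ hg
    have hfuv := key (-u + v) (by simpa [neg_add_rev] using huv.2)
    refine ⟨fun h => ?_, by simpa [neg_add_rev] using hfuv⟩
    rw [map_add, map_neg, h, neg_add_cancel, neg_zero, or_self] at hfuv
    exact ht hfuv

@[simp]
theorem addCayleyHom_apply (f : M →+ N) (hf : ∀ g ∈ s, f g ∈ t ∨ -f g ∈ t) (ht : (0 : N) ∉ t)
    (x : M) : addCayleyHom f hf ht x = f x := rfl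

def addCayleyIso (e : M ≃+ N) (he : ∀ g ∈ s, e g ∈ t ∨ -e g ∈ t)
    (he' : ∀ g ∈ t, e.symm g ∈ s ∨ -e.symm g ∈ s) (hs : (0 : M) ∉ s) (ht : (0 : N) ∉ t) :
    addCayley s ≃g addCayley t where
  toEquiv := e
  map_rel_iff' {u v} :=
    ⟨fun h => by simpa using (addCayleyHom e.symm.toAddMonoidHom he' hs).map_adj h,
      (addCayleyHom e.toAddMonoidHom he ht).map_adj⟩

theorem addCayley_preconnected (hs : AddSubgroup.closure s = ⊤) :
    (addCayley s).Preconnected := by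
  have hfrom0 : ∀ x, (addCayley s).Reachable 0 x := by
    intro x
    induction (hs ▸ AddSubgroup.mem_top x : x ∈ AddSubgroup.closure s) using
      AddSubgroup.closure_induction with
    | mem g hg =>
      by_cases hg0 : g = 0
      · rw [hg0]
      · exact Adj.reachable ((addCayley_adj _ _ _).2 ⟨Ne.symm hg0, .inl (by simpa using hg)⟩)
    | zero => rfl
    | add x y _ _ hx hy => exact hx.trans (by simpa using hy.map (addCayleyAddLeft s x).toHom)
    | neg x _ hx => simpa using (hx.map (addCayleyAddLeft s (-x)).toHom).symm
  exact fun u v => (hfrom0 u).symm.trans (hfrom0 v)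

theorem addCayley_neighborsLinked [Finite M] {k : ℕ}
    (h : ∀ a b, (addCayley s).Adj 0 a → (addCayley s).Adj 0 b →
      (addCayley s).LinkedAround k 0 a b) :
    (addCayley s).NeighborsLinked k := by
  intro z a b ha hb
  have hz : ∀ {c}, (addCayley s).Adj z c → (addCayley s).Adj 0 (-z + c) := fun hc => by
    rw [← neg_add_cancel z]
    exact addCayley_adj_add_iff_right.2 hc
  simpa using (h (-z + a) (-z + b) (hz ha) (hz hb)).map (addCayleyAddLeft s z).toEmbedding

end addCayley

section triangularLattice

variable {R R' : Type*} [Ring R] [Ring R']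

def triangularGenerators (R : Type*) [Ring R] : Set (R × R) := {(1, 0), (0, 1), (1, 1)}

/-- The neighbours of `x` are `x ± (1, 0)`, `x ± (0, 1)` and `x ± (1, 1)`. -/
abbrev triangularLattice (R : Type*) [Ring R] : SimpleGraph (R × R) :=
  addCayley (triangularGenerators R)

instance [DecidableEq R] : DecidablePred (· ∈ triangularGenerators R) := fun d =>
  decidable_of_iff (d = (1, 0) ∨ d = (0, 1) ∨ d = (1, 1)) (by simp [triangularGenerators])

theorem zero_notMem_triangularGenerators [Nontrivial R] :
    (0 : R × R) ∉ triangularGenerators R := by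
  simp [triangularGenerators, Prod.ext_iff]

theorem triangularLattice_adj {x y : R × R} :
    (triangularLattice R).Adj x y ↔ x ≠ y ∧ (y - x = (1, 0) ∨ y - x = (-1, 0) ∨ y - x = (0, 1) ∨
      y - x = (0, -1) ∨ y - x = (1, 1) ∨ y - x = (-1, -1)) := by
  rw [addCayley_adj, neg_add_eq_sub, neg_add_eq_sub, ← neg_sub y x]
  simp only [triangularGenerators, Set.mem_insert_iff, Set.mem_singleton_iff, neg_eq_iff_eq_neg,
    Prod.neg_mk, neg_zero]
  tauto

def triangularLatticeMap [Nontrivial R'] (f : R →+* R') :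
    triangularLattice R →g triangularLattice R' :=
  addCayleyHom (f.toAddMonoidHom.prodMap f.toAddMonoidHom)
    (by simp [triangularGenerators]) zero_notMem_triangularGenerators

@[simp]
theorem triangularLatticeMap_apply [Nontrivial R'] (f : R →+* R') (x : R × R) :
    triangularLatticeMap f x = (f x.1, f x.2) := rfl

variable (R) in
/-- Rotation by `60°`: `(1, 0) ↦ (1, 1) ↦ (0, 1) ↦ (-1, 0) ↦ (-1, -1) ↦ (0, -1) ↦ (1, 0)`. -/
def triangularRotation [Nontrivial R] : triangularLattice R ≃g triangularLattice R :=
  addCayleyIso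
    { toFun := fun x => (x.1 - x.2, x.1)
      invFun := fun x => (x.2, x.2 - x.1)
      left_inv := fun x => by simp
      right_inv := fun x => by simp
      map_add' := fun x y => by simp only [Prod.fst_add, Prod.snd_add, Prod.mk_add_mk]; abel_nf }
    (by simp [triangularGenerators]) (by simp [triangularGenerators])
    zero_notMem_triangularGenerators zero_notMem_triangularGenerators

@[simp]
theorem triangularRotation_apply [Nontrivial R] (x : R × R) :
    triangularRotation R x = (x.1 - x.2, x.1) := rfl

@[simp]
theorem triangularRotation_symm_apply [Nontrivial R] (x : R × R) :
    (triangularRotation R).symm x = (x.2, x.2 - x.1) := rfl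

/-- `(0, -1)` and `(1, 1)` are adjacent to `(1, 0)`, and rotating `h₂` back twice gives
`(-1, -1)`. -/
theorem triangularLattice_linkedAround_one_zero [Finite R] [Nontrivial R] {k : ℕ}
    (h₂ : (triangularLattice R).LinkedAround k 0 (1, 0) (0, 1))
    (h₃ : (triangularLattice R).LinkedAround k 0 (1, 0) (-1, 0)) {b : R × R}
    (hb : (triangularLattice R).Adj 0 b) : (triangularLattice R).LinkedAround k 0 (1, 0) b := by
  obtain ⟨-, hb⟩ := triangularLattice_adj.1 hb
  rw [sub_zero] at hb
  rcases hb with rfl | rfl | rfl | rfl | rfl | rfl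
  · exact fun _ _ _ _ _ => .refl
  · exact h₃
  · exact h₂
  · exact .of_adj (by simp [addCayley_adj, triangularGenerators])
  · exact .of_adj (by simp [addCayley_adj, triangularGenerators])
  · simpa [Prod.mk_zero_zero] using (h₂.symm.map (triangularRotation R).symm.toEmbedding).map
      (triangularRotation R).symm.toEmbedding

theorem triangularLattice_neighborsLinked [Finite R] [Nontrivial R] {k : ℕ}
    (h₂ : (triangularLattice R).LinkedAround k 0 (1, 0) (0, 1))
    (h₃ : (triangularLattice R).LinkedAround k 0 (1, 0) (-1, 0)) :
    (triangularLattice R).NeighborsLinked k := by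
  have hstep : ∀ a, (∀ b, (triangularLattice R).Adj 0 b →
      (triangularLattice R).LinkedAround k 0 a b) → ∀ b, (triangularLattice R).Adj 0 b →
      (triangularLattice R).LinkedAround k 0 (triangularRotation R a) b := by
    intro a ha b hb
    have hb' := (triangularRotation R).symm.map_adj_iff.2 hb
    rw [show (triangularRotation R).symm 0 = 0 by simp] at hb'
    simpa [Prod.mk_zero_zero] using (ha _ hb').map (triangularRotation R).toEmbedding
  have h10 := fun b => triangularLattice_linkedAround_one_zero h₂ h₃ (b := b)
  have h11 := hstep _ h10
  have h01 := hstep _ h11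
  have hn10 := hstep _ h01
  have hn1n1 := hstep _ hn10
  have h0n1 := hstep _ hn1n1
  simp only [triangularRotation_apply, sub_zero, sub_self, zero_sub] at h11 h01 hn10 hn1n1 h0n1
  refine addCayley_neighborsLinked fun a b ha => ?_
  obtain ⟨-, ha⟩ := triangularLattice_adj.1 ha
  rw [sub_zero] at ha
  rcases ha with rfl | rfl | rfl | rfl | rfl | rfl
  exacts [h10 b, hn10 b, h01 b, h0n1 b, h11 b, hn1n1 b]

end triangularLattice

section torus

theorem triangularLattice_zmod_preconnected (L : ℕ) [NeZero L] :
    (triangularLattice (ZMod L)).Preconnected := by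
  refine addCayley_preconnected (eq_top_iff.2 fun x _ => ?_)
  have hx : x = x.1.val • ((1, 0) : ZMod L × ZMod L) + x.2.val • (0, 1) := by ext <;> simp
  rw [hx]
  exact add_mem (nsmul_mem (AddSubgroup.subset_closure (by simp [triangularGenerators])) _)
    (nsmul_mem (AddSubgroup.subset_closure (by simp [triangularGenerators])) _)

/-- Paths in `ℤ²` that fit in a `6 × 6` window project injectively to `(ZMod L)²` when
`L ≥ 6`. -/
theorem linkedAround_of_int_paths {L : ℕ} [NeZero L] (hL : 6 ≤ L) {k : ℕ} {a b : ℤ × ℤ}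
    (ls : List (List (ℤ × ℤ)))
    (hpaths : ∀ l ∈ ls, (a :: (l ++ [b])).IsChain (triangularLattice ℤ).Adj)
    (hclose : ((0 : ℤ × ℤ) :: ls.flatten).Pairwise
      fun x y => x ≠ y ∧ |x.1 - y.1| < 6 ∧ |x.2 - y.2| < 6)
    (hk : k ≤ ls.length) :
    (triangularLattice (ZMod L)).LinkedAround k 0 (a.1, a.2) (b.1, b.2) := by
  have : Fact (1 < L) := ⟨by omega⟩
  set π := triangularLatticeMap (Int.castRingHom (ZMod L))
  have hL6 : (6 : ℤ) ≤ L := by exact_mod_cast hL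
  have := linkedAround_of_paths (G := triangularLattice (ZMod L)) (z := π 0) (a := π a)
    (b := π b) (ls.map (List.map π)) ?_ ?_ (by simpa using hk)
  · simpa [π, Prod.mk_zero_zero] using this
  · simp only [List.mem_map]
    rintro _ ⟨l, hl, rfl⟩
    simpa using List.isChain_map_of_isChain π (fun _ _ => π.map_adj) (hpaths l hl)
  · rw [← List.map_flatten, ← List.map_cons]
    refine List.pairwise_map.2 (hclose.imp fun ⟨hne, h1, h2⟩ heq => ?_)
    simp only [π, triangularLatticeMap_apply, eq_intCast, Prod.mk.injEq] at heq
    exact hne (Prod.ext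
      (not_not.1 fun h => ZMod.intCast_ne_intCast_of_abs_sub_lt h (h1.trans_le hL6) heq.1)
      (not_not.1 fun h => ZMod.intCast_ne_intCast_of_abs_sub_lt h (h2.trans_le hL6) heq.2))

theorem triangularLattice_zmod_neighborsLinked_of_six_le {L : ℕ} [NeZero L] (hL : 6 ≤ L) :
    (triangularLattice (ZMod L)).NeighborsLinked 5 := by
  have : Fact (1 < L) := ⟨by omega⟩
  refine triangularLattice_neighborsLinked ?_ ?_
  · simpa using linkedAround_of_int_paths (L := L) (a := (1, 0)) (b := (0, 1)) hL
      [[(1, 1)], [(2, 1), (2, 2), (1, 2)], [(0, -1), (-1, -1), (-1, 0)],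
        [(2, 0), (3, 1), (3, 2), (3, 3), (2, 3), (1, 3), (0, 2)],
        [(1, -1), (0, -2), (-1, -2), (-2, -2), (-2, -1), (-2, 0), (-1, 1)]]
      (by decide) (by decide) le_rfl
  · simpa using linkedAround_of_int_paths (L := L) (a := (1, 0)) (b := (-1, 0)) hL
      [[(1, 1), (0, 1)], [(0, -1), (-1, -1)], [(1, -1), (0, -2), (-1, -2), (-2, -2), (-2, -1)],
        [(2, 1), (2, 2), (1, 2), (0, 2), (-1, 1)],
        [(2, 0), (2, -1), (1, -2), (0, -3), (-1, -3), (-2, -3), (-3, -3), (-3, -2), (-3, -1),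
          (-2, 0)]]
      (by decide) (by decide) le_rfl

/-- In `(ZMod 3)²` the vertices `(1, 0)` and `(-1, 0) = (2, 0)` are adjacent. -/
theorem triangularLattice_zmod3_neighborsLinked :
    (triangularLattice (ZMod 3)).NeighborsLinked 5 :=
  triangularLattice_neighborsLinked
    (linkedAround_of_paths [[(2, 0)], [(1, 1)], [(1, 2)], [(2, 1)], [(0, 2)]]
      (by decide) (by decide) le_rfl)
    (.of_adj (by decide))

theorem triangularLattice_zmod4_neighborsLinked :
    (triangularLattice (ZMod 4)).NeighborsLinked 5 :=
  have : Fact (1 < 4) := ⟨by norm_num⟩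
  triangularLattice_neighborsLinked
    (linkedAround_of_paths [[(1, 1)], [(2, 1), (2, 2), (1, 2)], [(0, 3), (3, 3), (3, 0)],
      [(2, 0), (3, 1)], [(1, 3), (0, 2)]] (by decide) (by decide) le_rfl)
    (linkedAround_of_paths [[(2, 0)], [(1, 1), (0, 1)], [(0, 3), (3, 3)], [(1, 3), (2, 3)],
      [(2, 1), (3, 1)]] (by decide) (by decide) le_rfl)

theorem triangularLattice_zmod5_neighborsLinked :
    (triangularLattice (ZMod 5)).NeighborsLinked 5 :=
  have : Fact (1 < 5) := ⟨by norm_num⟩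
  triangularLattice_neighborsLinked
    (linkedAround_of_paths [[(1, 1)], [(2, 1), (2, 2), (1, 2)], [(0, 4), (4, 4), (4, 0)],
      [(2, 0), (3, 1), (3, 2), (3, 3), (2, 3), (1, 3), (0, 2)],
      [(1, 4), (2, 4), (3, 4), (3, 0), (4, 1)]] (by decide) (by decide) le_rfl)
    (linkedAround_of_paths [[(1, 1), (0, 1)], [(0, 4), (4, 4)],
      [(1, 4), (0, 3), (4, 3), (3, 3), (3, 4)], [(2, 1), (2, 2), (1, 2), (0, 2), (4, 1)],
      [(2, 0), (3, 0)]] (by decide) (by decide) le_rfl)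

theorem triangularLattice_zmod_neighborsLinked {L : ℕ} [NeZero L] (hL : 3 ≤ L) :
    (triangularLattice (ZMod L)).NeighborsLinked 5 := by
  obtain rfl | rfl | rfl | hL6 : L = 3 ∨ L = 4 ∨ L = 5 ∨ 6 ≤ L := by omega
  exacts [triangularLattice_zmod3_neighborsLinked, triangularLattice_zmod4_neighborsLinked,
    triangularLattice_zmod5_neighborsLinked, triangularLattice_zmod_neighborsLinked_of_six_le hL6]

end torus

end SimpleGraph

/-- On the triangular-lattice torus, every nonempty configuration `C` with at most 5
holes induces a connected subgraph. -/
theorem triangular_few_holes_connected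
    (L : ℕ) [NeZero L] (hL : 3 ≤ L)
    (G : SimpleGraph (ZMod L × ZMod L))
    (hG : ∀ x y : ZMod L × ZMod L, G.Adj x y ↔ x ≠ y ∧
      (y - x = (1, 0) ∨ y - x = (-1, 0) ∨ y - x = (0, 1) ∨
       y - x = (0, -1) ∨ y - x = (1, 1) ∨ y - x = (-1, -1)))
    (C : Set (ZMod L × ZMod L)) (hC : C.Nonempty)
    (hholes : (Cᶜ).ncard ≤ 5) :
    (G.induce C).Connected := by
  obtain rfl : G = SimpleGraph.triangularLattice (ZMod L) := by
    ext x y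
    rw [hG, SimpleGraph.triangularLattice_adj]
  exact SimpleGraph.connected_induce_of_neighborsLinked
    (SimpleGraph.triangularLattice_zmod_preconnected L)
    (SimpleGraph.triangularLattice_zmod_neighborsLinked hL) hC hholes
end

section
/- Let L ≥ 7 and let C ⊆ V be a nonempty subset such that the subgraph of G_L induced on C is not connected. Then γ(C) ≤ 6·|H| − 12, where H := V ∖ C. (This is the improved hop-count bound (gC1): a disconnected electron configuration admits at least 12 fewer hops than the trivial bound 6 N_h.) -/
/-!
Every hole has exactly six neighbours, so `γ(C) = 6 |H| - P`, where `P` is the number of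
ordered pairs of adjacent holes; it suffices to show that `P ≤ 11` forces `C` to be connected.

Let `K` be a connected cluster of holes. A connected set with at most five edges has at most
six vertices, so `K` misses a row and a column of the torus and unrolls into the plane
triangular lattice. There, a vertex of `K` that is extremal in one of the six directions sees
its neighbours in `K` inside a window of three consecutive directions. Unless they occupy
exactly the two outer directions of the window, the neighbours of that vertex inside `K` and
those outside `K` both form arcs of its hexagon; if all six extremal vertices had that gap
pattern they would be distinct and carry twelve ordered pairs of adjacent holes. Removing a
vertex with two such arcs keeps `K` connected, and the outer boundary of `K` arises from that
of the smaller cluster by gluing in an arc and deleting the vertex, so by induction the outer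
boundary of every cluster is connected. A path between two electrons can then detour around
each cluster it enters along that cluster's outer boundary, which consists of electrons.
-/

lemma Set.exists_notMem_image_of_ncard_lt {α β : Type*} [Finite α] {s : Set α} (f : α → β)
    (h : s.ncard < Nat.card β) : ∃ b, b ∉ f '' s := by
  by_contra! hb
  have := Set.ncard_image_le (f := f) s.toFinite
  rw [Set.eq_univ_of_forall hb, Set.ncard_univ] at this
  omega

lemma ZMod.eq_of_intCast_eq_of_abs_sub_lt {L : ℕ} {a b : ℤ} (hab : |a - b| < L)
    (h : (a : ZMod L) = b) : a = b := by
  rw [ZMod.intCast_eq_intCast_iff_dvd_sub] at h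
  have := Int.eq_zero_of_abs_lt_dvd h (by rwa [abs_sub_comm])
  omega

lemma ZMod.val_sub_of_eq_add_intCast {L : ℕ} [NeZero L] {x y a : ZMod L} {e : ℤ}
    (he : |e| ≤ 1) (hx : x ≠ a) (hy : y ≠ a) (hxy : y = x + e) :
    ((y - a).val : ℤ) = (x - a).val + e := by
  have hcast : y - a = (((x - a).val + e : ℤ) : ZMod L) := by
    push_cast; rw [ZMod.natCast_zmod_val, hxy]; ring
  have hpos : 0 < (x - a).val := ZMod.val_pos.2 (sub_ne_zero.2 hx)
  have hlt := ZMod.val_lt (x - a)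
  have hne : (((x - a).val : ℤ) + e) % L ≠ 0 := by
    rw [← ZMod.val_intCast, ← hcast]
    exact_mod_cast (ZMod.val_ne_zero _).2 (sub_ne_zero.2 hy)
  rw [hcast, ZMod.val_intCast]
  have he' := abs_le.1 he
  refine Int.emod_eq_of_lt (by omega) (lt_of_le_of_ne (by omega) fun h => hne ?_)
  rw [h, Int.emod_self]

namespace SimpleGraph

variable {V : Type*} {G : SimpleGraph V}

def outerBoundary (G : SimpleGraph V) (K : Set V) : Set V :=
  {u | u ∉ K ∧ ∃ k ∈ K, G.Adj k u}

def adjPairs (G : SimpleGraph V) (S : Set V) : Set (V × V) :=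
  {p | p.1 ∈ S ∧ p.2 ∈ S ∧ G.Adj p.1 p.2}

lemma adjPairs_mono {S T : Set V} (h : S ⊆ T) : G.adjPairs S ⊆ G.adjPairs T :=
  fun _ hp => ⟨h hp.1, h hp.2.1, hp.2.2⟩

lemma Reachable.exists_walk_of_induce {S : Set V} {x y : V} {hx : x ∈ S} {hy : y ∈ S}
    (h : (G.induce S).Reachable ⟨x, hx⟩ ⟨y, hy⟩) :
    ∃ p : G.Walk x y, ∀ z ∈ p.support, z ∈ S := by
  obtain ⟨q⟩ := h
  have hq : ∀ z ∈ (q.map (Embedding.induce S).toHom).support, z ∈ S := by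
    simp only [Walk.support_map, List.mem_map]
    rintro _ ⟨z, -, rfl⟩
    exact z.2
  exact ⟨_, hq⟩

lemma Walk.exists_walk_to_neighborSet {S : Set V} {w v : V} (p : G.Walk w v)
    (hp : ∀ x ∈ p.support, x ∈ S) (hw : w ≠ v) :
    ∃ n ∈ G.neighborSet v ∩ S, ∃ q : G.Walk w n, ∀ x ∈ q.support, x ∈ S \ {v} := by
  induction p with
  | nil => exact absurd rfl hw
  | @cons w w' v hadj p ih =>
    have hwS : w ∈ S := hp w (by simp)
    by_cases hw' : w' = v
    · subst hw'
      exact ⟨w, ⟨hadj.symm, hwS⟩, .nil, by simpa using ⟨hwS, hw⟩⟩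
    · obtain ⟨n, hn, q, hq⟩ := ih (fun x hx => hp x (by simp [hx])) hw'
      refine ⟨n, hn, .cons hadj q, ?_⟩
      simp only [Walk.support_cons, List.mem_cons]
      rintro x (rfl | hx)
      exacts [⟨hwS, hw⟩, hq x hx]

theorem connected_induce_sdiff_singleton {S : Set V} {v : V} (hS : (G.induce S).Connected)
    (hlink : (G.induce (G.neighborSet v ∩ S)).Connected) :
    (G.induce (S \ {v})).Connected := by
  by_cases hv : v ∉ S
  · rwa [Set.sdiff_singleton_eq_self hv]
  push Not at hv
  have hlink_sub : G.neighborSet v ∩ S ⊆ S \ {v} :=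
    fun u hu => ⟨hu.2, (hu.1 : G.Adj v u).ne'⟩
  obtain ⟨⟨n₀, hn₀⟩⟩ := hlink.nonempty
  refine (connected_iff_exists_forall_reachable _).2
    ⟨⟨n₀, hlink_sub hn₀⟩, fun ⟨w, hw⟩ => ?_⟩
  obtain ⟨p, hp⟩ := (hS.preconnected ⟨w, hw.1⟩ ⟨v, hv⟩).exists_walk_of_induce
  obtain ⟨n, hn, q, hq⟩ := p.exists_walk_to_neighborSet hp hw.2
  have hn₀n :=
    (hlink.preconnected ⟨n₀, hn₀⟩ ⟨n, hn⟩).map (induceHomOfLE G hlink_sub).toHom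
  exact hn₀n.trans ⟨(q.induce _ hq).reverse⟩

theorem exists_adj_inter_sdiff {A K : Set V} (hA : (G.induce A).Preconnected)
    (h₁ : (A ∩ K).Nonempty) (h₂ : (A \ K).Nonempty) :
    ∃ x ∈ A ∩ K, ∃ y ∈ A \ K, G.Adj x y := by
  obtain ⟨x, hxA, hxK⟩ := h₁
  obtain ⟨y, hyA, hyK⟩ := h₂
  obtain ⟨q⟩ := hA ⟨x, hxA⟩ ⟨y, hyA⟩
  obtain ⟨d, -, hd₁, hd₂⟩ := q.exists_boundary_dart {z | z.1 ∈ K} hxK hyK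
  exact ⟨d.fst, ⟨d.fst.2, hd₁⟩, d.snd, ⟨d.snd.2, hd₂⟩, d.adj⟩

lemma outerBoundary_singleton (v : V) : G.outerBoundary {v} = G.neighborSet v := by
  ext u
  simp only [outerBoundary, Set.mem_singleton_iff, exists_eq_left, Set.mem_ofPred_eq,
    mem_neighborSet, and_iff_right_iff_imp]
  exact fun h => h.ne'

lemma outerBoundary_eq_sdiff {K : Set V} {v : V} (hv : v ∈ K) :
    G.outerBoundary K = (G.outerBoundary (K \ {v}) ∪ (G.neighborSet v \ K)) \ {v} := by
  ext u
  simp only [outerBoundary, Set.mem_sdiff, Set.mem_union, Set.mem_ofPred_eq, Set.mem_singleton_iff,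
    mem_neighborSet]
  constructor
  · rintro ⟨huK, k, hk, hku⟩
    refine ⟨?_, fun h => huK (h ▸ hv)⟩
    by_cases hkv : k = v
    · exact .inr ⟨hkv ▸ hku, huK⟩
    · exact .inl ⟨fun h => huK h.1, k, ⟨hk, hkv⟩, hku⟩
  · rintro ⟨⟨huK, k, hk, hku⟩ | ⟨hvu, huK⟩, huv⟩
    · exact ⟨fun h => huK ⟨h, huv⟩, k, hk.1, hku⟩
    · exact ⟨huK, v, hv, hvu⟩

lemma neighborSet_inter_outerBoundary_sdiff_union {K : Set V} {v : V} :
    G.neighborSet v ∩ (G.outerBoundary (K \ {v}) ∪ (G.neighborSet v \ K)) =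
      G.neighborSet v \ K := by
  ext u
  simp only [outerBoundary, Set.mem_inter_iff, Set.mem_union, Set.mem_sdiff, Set.mem_ofPred_eq,
    Set.mem_singleton_iff, mem_neighborSet]
  constructor
  · rintro ⟨hvu, ⟨huK, -⟩ | ⟨-, huK⟩⟩
    · exact ⟨hvu, fun h => huK ⟨h, hvu.ne'⟩⟩
    · exact ⟨hvu, huK⟩
  · rintro ⟨hvu, huK⟩
    exact ⟨hvu, .inr ⟨hvu, huK⟩⟩

def Peelable (G : SimpleGraph V) (K : Set V) (v : V) : Prop :=
  (G.induce (G.neighborSet v ∩ K)).Connected ∧ (G.induce (G.neighborSet v \ K)).Connected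

theorem Peelable.connected_induce_sdiff {K : Set V} {v : V} (h : G.Peelable K v)
    (hK : (G.induce K).Connected) : (G.induce (K \ {v})).Connected :=
  connected_induce_sdiff_singleton hK h.1

theorem Peelable.connected_outerBoundary {K : Set V} {v : V} (h : G.Peelable K v) (hv : v ∈ K)
    (hnbr : (G.induce (G.neighborSet v)).Connected)
    (hB : (G.induce (G.outerBoundary (K \ {v}))).Connected) :
    (G.induce (G.outerBoundary K)).Connected := by
  obtain ⟨x, ⟨hvx, hxK⟩, y, ⟨hvy, hyK⟩, hxy⟩ := exists_adj_inter_sdiff hnbr.preconnected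
    (Set.nonempty_coe_sort.1 h.1.nonempty) (Set.nonempty_coe_sort.1 h.2.nonempty)
  have hy : y ∈ G.outerBoundary (K \ {v}) ∩ (G.neighborSet v \ K) :=
    ⟨⟨fun h => hyK h.1, x, ⟨hxK, (hvx : G.Adj v x).ne'⟩, hxy⟩, hvy, hyK⟩
  rw [outerBoundary_eq_sdiff hv]
  refine connected_induce_sdiff_singleton
    (induce_union_connected hB.preconnected h.2.preconnected ⟨y, hy⟩) ?_
  rw [neighborSet_inter_outerBoundary_sdiff_union]
  exact h.2

theorem connected_induce_image_range {f : ℕ → V} (hf : ∀ j, G.Adj (f j) (f (j + 1)))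
    (n : ℕ) :
    (G.induce (f '' ↑(Finset.range (n + 1)))).Connected := by
  have hsingle : ∀ v, (G.induce {v}).Connected := fun v => by
    rw [induce_singleton_eq_top]; exact connected_top
  induction n with
  | zero =>
    rw [Finset.range_one, Finset.coe_singleton, Set.image_singleton]
    exact hsingle _
  | succ n ih =>
    rw [Finset.range_add_one, Finset.coe_insert, Set.image_insert_eq, Set.insert_eq, Set.union_comm]
    exact connected_induce_union ih.preconnected (hsingle _).preconnected
      (Set.mem_image_of_mem f (by simp)) rfl (hf n)

theorem two_mul_ncard_sub_one_le_ncard_adjPairs [Finite V] {S : Set V}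
    (hS : (G.induce S).Connected) :
    2 * (S.ncard - 1) ≤ (G.adjPairs S).ncard := by
  classical
  have := Fintype.ofFinite V
  have hdarts : (G.adjPairs S).ncard = Fintype.card (G.induce S).Dart :=
    (Nat.card_congr
      { toFun := fun p => ⟨(⟨p.1.1, p.2.1⟩, ⟨p.1.2, p.2.2.1⟩), p.2.2.2⟩
        invFun := fun d => ⟨(d.fst.1, d.snd.1), d.fst.2, d.snd.2, d.adj⟩
        left_inv := fun _ => rfl
        right_inv := fun _ => rfl }).trans Nat.card_eq_fintype_card
  have hedges := hS.card_vert_le_card_edgeSet_add_one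
  simp only [Nat.card_eq_fintype_card, ← edgeFinset_card] at hedges
  rw [hdarts, dart_card_eq_twice_card_edges, Set.ncard_eq_toFinset_card', Set.toFinset_card]
  omega

namespace ComponentCompl

variable {C : Set V}

lemma mem_of_walk {D : G.ComponentCompl C} {x y : V} (p : G.Walk x y) (hx : x ∈ D)
    (hp : ∀ z ∈ p.support, z ∉ C) : ∀ z ∈ p.support, z ∈ D := by
  induction p with
  | nil => simpa using hx
  | cons hadj p ih =>
    simp only [Walk.support_cons, List.mem_cons, forall_eq_or_imp] at hp ⊢
    exact ⟨hx, ih (D.mem_of_adj _ _ hx (hp.2 _ p.start_mem_support) hadj) hp.2⟩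

theorem connected_induce (D : G.ComponentCompl C) : (G.induce (D : Set V)).Connected := by
  rw [connected_iff]
  refine ⟨fun ⟨x, hx⟩ ⟨y, hy⟩ => ?_, Set.nonempty_coe_sort.2 D.nonempty⟩
  obtain ⟨hxC, rfl⟩ := hx
  obtain ⟨hyC, hxy⟩ := hy
  obtain ⟨p, hp⟩ := (ConnectedComponent.exact hxy.symm).exists_walk_of_induce
  exact ⟨p.induce _ (mem_of_walk p (G.componentComplMk_mem hxC) hp)⟩

lemma outerBoundary_subset (D : G.ComponentCompl C) : G.outerBoundary D ⊆ C :=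
  fun u ⟨huD, d, hd, hdu⟩ => by_contra fun huC => huD (D.mem_of_adj d u hd huC hdu)

end ComponentCompl

lemma Walk.reachable_induce_of_outerBoundary {C : Set V}
    (hD : ∀ D : G.ComponentCompl C, (G.induce (G.outerBoundary D)).Preconnected)
    {w x : V} (p : G.Walk w x) (hx : x ∈ C) :
    (∀ hw : w ∈ C, (G.induce C).Reachable ⟨w, hw⟩ ⟨x, hx⟩) ∧
    ∀ hw : w ∉ C, ∀ b ∈ G.outerBoundary (G.componentComplMk hw),
      ∀ hb : b ∈ C, (G.induce C).Reachable ⟨b, hb⟩ ⟨x, hx⟩ := by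
  induction p with
  | nil => exact ⟨fun _ => .rfl, fun hw => absurd hx hw⟩
  | @cons w w' x hadj p ih =>
    specialize ih hx
    by_cases hw : w ∈ C <;> by_cases hw' : w' ∈ C
    · exact ⟨fun _ => (Adj.reachable (induce_adj.2 hadj)).trans (ih.1 hw'),
        fun h => absurd hw h⟩
    · refine ⟨fun _ => ih.2 hw' w ?_ hw, fun h => absurd hw h⟩
      exact ⟨fun h => ComponentCompl.notMem_of_mem h hw, w', G.componentComplMk_mem hw',
        hadj.symm⟩
    · refine ⟨fun h => absurd h hw, fun hw b hb hbC => ?_⟩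
      have hw'B : w' ∈ G.outerBoundary (G.componentComplMk hw) :=
        ⟨fun h => ComponentCompl.notMem_of_mem h hw', w, G.componentComplMk_mem hw, hadj⟩
      have hbw' := (hD _ ⟨b, hb⟩ ⟨w', hw'B⟩).map
        (induceHomOfLE G (ComponentCompl.outerBoundary_subset _)).toHom
      exact hbw'.trans (ih.1 hw')
    · refine ⟨fun h => absurd h hw, fun hw => ?_⟩
      rw [G.componentComplMk_eq_of_adj hw hw' hadj]
      exact ih.2 hw'

theorem connected_induce_of_outerBoundary_componentCompl (hG : G.Preconnected) {C : Set V}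
    (hC : C.Nonempty)
    (hD : ∀ D : G.ComponentCompl C, (G.induce (G.outerBoundary D)).Preconnected) :
    (G.induce C).Connected := by
  obtain ⟨x, hx⟩ := hC
  refine (connected_iff_exists_forall_reachable _).2 ⟨⟨x, hx⟩, fun ⟨w, hw⟩ => ?_⟩
  exact (((hG w x).some.reachable_induce_of_outerBoundary hD hx).1 hw).symm

theorem ncard_adj_fst_mem [Finite V] {d : ℕ} (hreg : ∀ v, (G.neighborSet v).ncard = d)
    (S : Set V) : {p : V × V | p.1 ∈ S ∧ G.Adj p.1 p.2}.ncard = d * S.ncard := by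
  have := Fintype.ofFinite S
  calc {p : V × V | p.1 ∈ S ∧ G.Adj p.1 p.2}.ncard
      = Nat.card (Σ v : S, G.neighborSet v) :=
        Nat.card_congr
          { toFun := fun p => ⟨⟨p.1.1, p.2.1⟩, ⟨p.1.2, p.2.2⟩⟩
            invFun := fun q => ⟨(q.1.1, q.2.1), q.1.2, q.2.2⟩
            left_inv := fun _ => rfl
            right_inv := fun _ => rfl }
    _ = ∑ v : S, (G.neighborSet v).ncard := by simp only [Nat.card_sigma, Nat.card_coe_set_eq]
    _ = d * S.ncard := by
        simp only [hreg, Finset.sum_const, Finset.card_univ, smul_eq_mul, mul_comm,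
          Set.ncard_eq_toFinset_card', Set.toFinset_card]

theorem ncard_hops_add_ncard_adjPairs [Finite V] {d : ℕ}
    (hreg : ∀ v, (G.neighborSet v).ncard = d) (S : Set V) :
    {p : V × V | p.1 ∈ S ∧ p.2 ∉ S ∧ G.Adj p.1 p.2}.ncard + (G.adjPairs S).ncard =
      d * S.ncard := by
  rw [← ncard_adj_fst_mem hreg, ← Set.ncard_union_eq]
  · congr 1
    ext p
    simp only [adjPairs, Set.mem_union, Set.mem_ofPred_eq]
    tauto
  · exact Set.disjoint_left.2 fun p h₁ h₂ => h₁.2.1 h₂.2.1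

end SimpleGraph

namespace TriangularLattice

open SimpleGraph

def hexDir : ZMod 6 → ℤ × ℤ := ![(1, 0), (1, 1), (0, 1), (-1, 0), (-1, -1), (0, -1)]

lemma hexDir_add_one (i : ZMod 6) : hexDir (i + 1) = hexDir i + hexDir (i + 2) := by
  revert i; decide

lemma hexDir_add_three (i : ZMod 6) : hexDir (i + 3) = -hexDir i := by
  revert i; decide

lemma hexDir_injective : Function.Injective hexDir := by decide

lemma hexDir_ne_zero (i : ZMod 6) : hexDir i ≠ 0 := by
  revert i; decide

lemma abs_hexDir_le (i : ZMod 6) : |(hexDir i).1| ≤ 1 ∧ |(hexDir i).2| ≤ 1 := by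
  revert i; decide

def cycInterval (s : ZMod 6) (n : ℕ) : Finset (ZMod 6) :=
  Finset.image (fun j : ℕ => s + (j : ZMod 6)) (Finset.range n)

lemma compl_cycInterval (s : ZMod 6) {n : ℕ} (hn : n ≤ 6) :
    (cycInterval s n)ᶜ = cycInterval (s + n) (6 - n) := by
  have h : ∀ s : ZMod 6, ∀ n ∈ Finset.range 7,
      (cycInterval s n)ᶜ = cycInterval (s + n) (6 - n) := by decide
  exact h s n (Finset.mem_range.2 (by omega))

lemma cycInterval_zero_six : cycInterval 0 6 = Finset.univ := by decide

def IsProperArc (I : Finset (ZMod 6)) : Prop :=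
  ∃ s : ZMod 6, ∃ n ∈ Finset.Ioo 0 6, I = cycInterval s n

instance : DecidablePred IsProperArc := fun I =>
  inferInstanceAs (Decidable (∃ s : ZMod 6, ∃ n ∈ Finset.Ioo 0 6, I = cycInterval s n))

lemma IsProperArc.compl {I : Finset (ZMod 6)} (hI : IsProperArc I) : IsProperArc Iᶜ := by
  obtain ⟨s, n, hn, rfl⟩ := hI
  rw [Finset.mem_Ioo] at hn
  exact ⟨s + n, 6 - n, Finset.mem_Ioo.2 (by omega), compl_cycInterval s (by omega)⟩

lemma isProperArc_of_subset (c : ZMod 6) {I : Finset (ZMod 6)} (hI : I ⊆ cycInterval (c + 2) 3)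
    (hne : I.Nonempty) (hgap : I ≠ {c + 2, c + 4}) : IsProperArc I := by
  have h : ∀ c : ZMod 6, ∀ I ∈ (cycInterval (c + 2) 3).powerset,
      I.Nonempty → I ≠ {c + 2, c + 4} → IsProperArc I := by decide
  exact h c I (Finset.mem_powerset.2 hI) hne hgap

/-- Twice the Euclidean inner product when `(1, 0)` and `(0, 1)` are unit vectors at angle
`120°`; then `hexDir i` is the unit vector at angle `60° * i`. -/
def hexForm (p q : ℤ × ℤ) : ℤ := 2 * p.1 * q.1 + 2 * p.2 * q.2 - p.1 * q.2 - p.2 * q.1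

lemma hexForm_add_left (p p' q : ℤ × ℤ) : hexForm (p + p') q = hexForm p q + hexForm p' q := by
  simp only [hexForm, Prod.fst_add, Prod.snd_add]; ring

lemma hexForm_hexDir_nonpos_iff (c j : ZMod 6) :
    hexForm (hexDir j) (hexDir c) ≤ 0 ↔ j ∈ cycInterval (c + 2) 3 := by
  revert c j; decide

variable {L : ℕ}

def toTorus (L : ℕ) : ℤ × ℤ →+ ZMod L × ZMod L :=
  (Int.castAddHom (ZMod L)).prodMap (Int.castAddHom (ZMod L))

def dir (L : ℕ) (i : ZMod 6) : ZMod L × ZMod L := toTorus L (hexDir i)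

lemma eq_of_toTorus_eq {p q : ℤ × ℤ} (h₁ : |p.1 - q.1| < L) (h₂ : |p.2 - q.2| < L)
    (h : toTorus L p = toTorus L q) : p = q :=
  Prod.ext (ZMod.eq_of_intCast_eq_of_abs_sub_lt h₁ congr($h.1))
    (ZMod.eq_of_intCast_eq_of_abs_sub_lt h₂ congr($h.2))

lemma dir_ne_zero (hL : 2 ≤ L) (i : ZMod 6) : dir L i ≠ 0 := fun h => by
  have hb := abs_hexDir_le i
  refine hexDir_ne_zero i (eq_of_toTorus_eq (q := 0) ?_ ?_ (h.trans (map_zero _).symm)) <;>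
    simp only [Prod.fst_zero, Prod.snd_zero, sub_zero] <;> omega

lemma dir_injective (hL : 3 ≤ L) : Function.Injective (dir L) := fun i j h => by
  have hi := abs_hexDir_le i
  have hj := abs_hexDir_le j
  refine hexDir_injective (eq_of_toTorus_eq ?_ ?_ h)
  · have := abs_sub (hexDir i).1 (hexDir j).1; omega
  · have := abs_sub (hexDir i).2 (hexDir j).2; omega

lemma dir_add_one (i : ZMod 6) : dir L (i + 1) = dir L i + dir L (i + 2) := by
  rw [dir, hexDir_add_one, map_add]; rfl

lemma dir_add_three (i : ZMod 6) : dir L (i + 3) = -dir L i := by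
  rw [dir, hexDir_add_three, map_neg]; rfl

def torus (L : ℕ) : SimpleGraph (ZMod L × ZMod L) where
  Adj x y := x ≠ y ∧ ∃ i, y - x = dir L i
  symm := ⟨fun _ _ ⟨hne, i, h⟩ =>
    ⟨hne.symm, i + 3, by rw [dir_add_three, ← h, neg_sub]⟩⟩
  loopless := ⟨fun _ h => h.1 rfl⟩

lemma torus_adj (hL : 2 ≤ L) {x y : ZMod L × ZMod L} :
    (torus L).Adj x y ↔ ∃ i, y = x + dir L i := by
  constructor
  · rintro ⟨-, i, h⟩
    exact ⟨i, eq_add_of_sub_eq' h⟩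
  · rintro ⟨i, rfl⟩
    exact ⟨fun h => dir_ne_zero hL i (by simpa using h), i, add_sub_cancel_left _ _⟩

lemma neighborSet_torus (hL : 2 ≤ L) (x : ZMod L × ZMod L) :
    (torus L).neighborSet x = Set.range (x + dir L ·) := by
  ext y
  simp [torus_adj hL, eq_comm]

lemma ncard_neighborSet_torus (hL : 3 ≤ L) (x : ZMod L × ZMod L) :
    ((torus L).neighborSet x).ncard = 6 := by
  rw [neighborSet_torus (by omega),
    Set.ncard_range_of_injective (f := fun i => x + dir L i)
      ((add_right_injective x).comp (dir_injective hL)), Nat.card_zmod]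

lemma reachable_add_nsmul_dir (hL : 2 ≤ L) (x : ZMod L × ZMod L) (i : ZMod 6) (n : ℕ) :
    (torus L).Reachable x (x + n • dir L i) := by
  induction n with
  | zero => simp
  | succ n ih =>
    refine ih.trans (Adj.reachable ((torus_adj hL).2 ⟨i, ?_⟩))
    rw [succ_nsmul, add_assoc]

lemma preconnected_torus [NeZero L] (hL : 2 ≤ L) : (torus L).Preconnected := fun x y => by
  convert (reachable_add_nsmul_dir hL x 0 (y - x).1.val).trans
    (reachable_add_nsmul_dir hL _ 2 (y - x).2.val) using 1
  ext <;> simp [dir, toTorus, hexDir]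

lemma adj_add_dir_add_one (hL : 2 ≤ L) (x : ZMod L × ZMod L) (i : ZMod 6) :
    (torus L).Adj (x + dir L i) (x + dir L (i + 1)) :=
  (torus_adj hL).2 ⟨i + 2, by rw [dir_add_one, add_assoc]⟩

lemma connected_induce_image_cycInterval (hL : 2 ≤ L) (x : ZMod L × ZMod L) (s : ZMod 6)
    {n : ℕ} (hn : 0 < n) :
    ((torus L).induce ((x + dir L ·) '' ↑(cycInterval s n))).Connected := by
  obtain ⟨m, rfl⟩ : ∃ m, n = m + 1 := ⟨n - 1, by omega⟩
  rw [cycInterval, Finset.coe_image, Set.image_image]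
  refine connected_induce_image_range (fun j => ?_) m
  simpa [add_assoc] using adj_add_dir_add_one hL x (s + j)

lemma connected_neighborSet_torus (hL : 2 ≤ L) (x : ZMod L × ZMod L) :
    ((torus L).induce ((torus L).neighborSet x)).Connected := by
  rw [neighborSet_torus hL, ← Set.image_univ, ← Finset.coe_univ, ← cycInterval_zero_six]
  exact connected_induce_image_cycInterval hL x 0 (by norm_num)

open Classical in
noncomputable def linkIdx (K : Set (ZMod L × ZMod L)) (v : ZMod L × ZMod L) : Finset (ZMod 6) :=
  {i | v + dir L i ∈ K}

lemma mem_linkIdx {K : Set (ZMod L × ZMod L)} {v : ZMod L × ZMod L} {i : ZMod 6} :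
    i ∈ linkIdx K v ↔ v + dir L i ∈ K := by
  simp [linkIdx]

lemma neighborSet_inter_eq_image (hL : 2 ≤ L) (K : Set (ZMod L × ZMod L))
    (v : ZMod L × ZMod L) :
    (torus L).neighborSet v ∩ K = (v + dir L ·) '' ↑(linkIdx K v) := by
  ext u
  simp only [neighborSet_torus hL, Set.mem_inter_iff, Set.mem_range, Set.mem_image,
    Finset.mem_coe, mem_linkIdx]
  constructor
  · rintro ⟨⟨i, rfl⟩, hu⟩
    exact ⟨i, hu, rfl⟩
  · rintro ⟨i, hi, rfl⟩
    exact ⟨⟨i, rfl⟩, hi⟩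

lemma neighborSet_sdiff_eq_image (hL : 2 ≤ L) (K : Set (ZMod L × ZMod L))
    (v : ZMod L × ZMod L) :
    (torus L).neighborSet v \ K = (v + dir L ·) '' ↑(linkIdx K v)ᶜ := by
  ext u
  simp only [neighborSet_torus hL, Set.mem_sdiff, Set.mem_range, Set.mem_image,
    Finset.mem_coe, Finset.mem_compl, mem_linkIdx]
  constructor
  · rintro ⟨⟨i, rfl⟩, hu⟩
    exact ⟨i, hu, rfl⟩
  · rintro ⟨i, hi, rfl⟩
    exact ⟨⟨i, rfl⟩, hi⟩

lemma IsProperArc.connected_induce_image (hL : 2 ≤ L) {I : Finset (ZMod 6)} (hI : IsProperArc I)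
    (v : ZMod L × ZMod L) : ((torus L).induce ((v + dir L ·) '' ↑I)).Connected := by
  obtain ⟨s, n, hn, rfl⟩ := hI
  exact connected_induce_image_cycInterval hL v s (Finset.mem_Ioo.1 hn).1

lemma peelable_of_isProperArc (hL : 2 ≤ L) {K : Set (ZMod L × ZMod L)} {v : ZMod L × ZMod L}
    (h : IsProperArc (linkIdx K v)) : (torus L).Peelable K v := by
  rw [Peelable, neighborSet_inter_eq_image hL, neighborSet_sdiff_eq_image hL]
  exact ⟨h.connected_induce_image hL v, h.compl.connected_induce_image hL v⟩

/-- Cutting the torus along a row and a column missed by `K` unrolls `K` into `ℤ × ℤ`. -/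
lemma exists_chart [NeZero L] {K : Set (ZMod L × ZMod L)} (hK : K.ncard < L) :
    ∃ φ : ZMod L × ZMod L → ℤ × ℤ,
      ∀ v ∈ K, ∀ i, v + dir L i ∈ K → φ (v + dir L i) = φ v + hexDir i := by
  obtain ⟨a, ha⟩ := Set.exists_notMem_image_of_ncard_lt Prod.fst (by rwa [Nat.card_zmod])
  obtain ⟨b, hb⟩ := Set.exists_notMem_image_of_ncard_lt Prod.snd (by rwa [Nat.card_zmod])
  refine ⟨fun v => (((v.1 - a).val : ℤ), ((v.2 - b).val : ℤ)), fun v hv i hvi => ?_⟩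
  have hbound := abs_hexDir_le i
  exact Prod.ext
    (ZMod.val_sub_of_eq_add_intCast hbound.1 (fun h => ha ⟨v, hv, h⟩)
      (fun h => ha ⟨_, hvi, h⟩) (by simp [dir, toTorus]))
    (ZMod.val_sub_of_eq_add_intCast hbound.2 (fun h => hb ⟨v, hv, h⟩)
      (fun h => hb ⟨_, hvi, h⟩) (by simp [dir, toTorus]))

lemma exists_linkIdx_subset [NeZero L] {K : Set (ZMod L × ZMod L)} (hK : K.Nonempty)
    {φ : ZMod L × ZMod L → ℤ × ℤ}
    (hφ : ∀ v ∈ K, ∀ i, v + dir L i ∈ K → φ (v + dir L i) = φ v + hexDir i)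
    (c : ZMod 6) :
    ∃ v ∈ K, linkIdx K v ⊆ cycInterval (c + 2) 3 := by
  obtain ⟨v, hv, hmax⟩ :=
    Set.exists_max_image K (fun v => hexForm (φ v) (hexDir c)) K.toFinite hK
  refine ⟨v, hv, fun j hj => ?_⟩
  rw [mem_linkIdx] at hj
  have := hmax _ hj
  rw [hφ v hv j hj, hexForm_add_left] at this
  exact (hexForm_hexDir_nonpos_iff c j).1 (by omega)

theorem twelve_le_ncard_adjPairs [NeZero L] (hL : 3 ≤ L) {K : Set (ZMod L × ZMod L)}
    (v : ZMod 6 → ZMod L × ZMod L) (hvK : ∀ c, v c ∈ K)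
    (hv : ∀ c, linkIdx K (v c) = {c + 2, c + 4}) : 12 ≤ ((torus L).adjPairs K).ncard := by
  let F : ZMod 6 × Bool → (ZMod L × ZMod L) × (ZMod L × ZMod L) :=
    fun cb => (v cb.1, v cb.1 + dir L (cb.1 + bif cb.2 then 2 else 4))
  have hF : Set.range F ⊆ (torus L).adjPairs K := by
    rintro _ ⟨⟨c, b⟩, rfl⟩
    refine ⟨hvK c, mem_linkIdx.1 ?_, (torus_adj (by omega)).2 ⟨_, rfl⟩⟩
    rw [hv]
    cases b <;> simp
  have hFinj : F.Injective := by
    rintro ⟨c, b⟩ ⟨c', b'⟩ h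
    simp only [F, Prod.mk.injEq] at h
    obtain ⟨h₁, h₂⟩ := h
    have hc : c = c' := by
      have key : ∀ c c' : ZMod 6,
          ({c + 2, c + 4} : Finset (ZMod 6)) = {c' + 2, c' + 4} → c = c' := by decide
      exact key c c' (by rw [← hv, ← hv, h₁])
    subst hc
    have hb := add_left_cancel (dir_injective hL (add_left_cancel h₂))
    obtain rfl : b = b' := by revert hb; cases b <;> cases b' <;> decide
    rfl
  calc 12 = (Set.range F).ncard := by
        simp [Set.ncard_range_of_injective hFinj]
    _ ≤ _ := Set.ncard_le_ncard hF

theorem exists_peelable [NeZero L] (hL : 7 ≤ L) {K : Set (ZMod L × ZMod L)}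
    (hK : ((torus L).induce K).Connected) (hK₂ : 2 ≤ K.ncard)
    (hpairs : ((torus L).adjPairs K).ncard ≤ 11) : ∃ v ∈ K, (torus L).Peelable K v := by
  have hsize := two_mul_ncard_sub_one_le_ncard_adjPairs hK
  obtain ⟨φ, hφ⟩ := exists_chart (K := K) (by omega)
  have hlink : ∀ v ∈ K, (linkIdx K v).Nonempty := fun v hv => by
    have : Nontrivial K := Set.one_lt_ncard_iff_nontrivial.1 (by omega) |>.coe_sort
    obtain ⟨⟨u, hu⟩, hvu⟩ := hK.preconnected.exists_adj_of_nontrivial ⟨v, hv⟩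
    obtain ⟨i, rfl⟩ := (torus_adj (by omega)).1 hvu
    exact ⟨i, mem_linkIdx.2 hu⟩
  choose v hvK hv using exists_linkIdx_subset (Set.nonempty_of_ncard_ne_zero (by omega)) hφ
  by_contra! hnone
  refine absurd (twelve_le_ncard_adjPairs (by omega) v hvK fun c => ?_) (by omega)
  by_contra hgap
  exact hnone (v c) (hvK c)
    (peelable_of_isProperArc (by omega) (isProperArc_of_subset c (hv c) (hlink _ (hvK c)) hgap))

theorem connected_outerBoundary [NeZero L] (hL : 7 ≤ L) {K : Set (ZMod L × ZMod L)}
    (hK : ((torus L).induce K).Connected) (hpairs : ((torus L).adjPairs K).ncard ≤ 11) :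
    ((torus L).induce ((torus L).outerBoundary K)).Connected := by
  obtain ⟨n, hn⟩ : ∃ n, K.ncard = n + 1 := by
    have := (Set.ncard_pos K.toFinite).2 (Set.nonempty_coe_sort.1 hK.nonempty)
    exact ⟨K.ncard - 1, by omega⟩
  induction n generalizing K with
  | zero =>
    obtain ⟨k, rfl⟩ := Set.ncard_eq_one.1 hn
    rw [outerBoundary_singleton]
    exact connected_neighborSet_torus (by omega) k
  | succ n ih =>
    obtain ⟨v, hv, hpeel⟩ := exists_peelable hL hK (by omega) hpairs
    refine hpeel.connected_outerBoundary hv (connected_neighborSet_torus (by omega) v) ?_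
    refine ih (hpeel.connected_induce_sdiff hK) ?_ ?_
    · exact (Set.ncard_le_ncard (adjPairs_mono Set.sdiff_subset)).trans hpairs
    · rw [Set.ncard_sdiff_singleton_of_mem hv]; omega

lemma torus_adj_iff {x y : ZMod L × ZMod L} :
    (torus L).Adj x y ↔ x ≠ y ∧
      (y - x = (1, 0) ∨ y - x = (-1, 0) ∨ y - x = (0, 1) ∨
       y - x = (0, -1) ∨ y - x = (1, 1) ∨ y - x = (-1, -1)) := by
  refine and_congr_right fun _ => ⟨?_, ?_⟩
  · rintro ⟨i, h⟩
    fin_cases i <;> simp [h, dir, toTorus, hexDir]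
  · rintro (h | h | h | h | h | h)
    exacts [⟨0, by simp [h, dir, toTorus, hexDir]⟩, ⟨3, by simp [h, dir, toTorus, hexDir]⟩,
      ⟨2, by simp [h, dir, toTorus, hexDir]⟩, ⟨5, by simp [h, dir, toTorus, hexDir]⟩,
      ⟨1, by simp [h, dir, toTorus, hexDir]⟩, ⟨4, by simp [h, dir, toTorus, hexDir]⟩]

end TriangularLattice

open SimpleGraph TriangularLattice

/-- On the triangular-lattice torus with `L ≥ 7`: if the electron configuration `C`
is nonempty and not connected, then the number `γ(C)` of possible hops (pairs of a
hole adjacent to an electron) satisfies `γ(C) ≤ 6|H| - 12`, where `H = V ∖ C` is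
the set of holes. -/
theorem disconnected_configuration_hop_bound
    (L : ℕ) [NeZero L] (hL : 7 ≤ L)
    (G : SimpleGraph (ZMod L × ZMod L))
    (hG : ∀ x y : ZMod L × ZMod L, G.Adj x y ↔ x ≠ y ∧
      (y - x = (1, 0) ∨ y - x = (-1, 0) ∨ y - x = (0, 1) ∨
       y - x = (0, -1) ∨ y - x = (1, 1) ∨ y - x = (-1, -1)))
    (C : Set (ZMod L × ZMod L)) (hC : C.Nonempty)
    (hdisc : ¬ (G.induce C).Connected) :
    (({p : (ZMod L × ZMod L) × (ZMod L × ZMod L) |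
        p.1 ∈ Cᶜ ∧ p.2 ∈ C ∧ G.Adj p.1 p.2}.ncard : ℤ) ≤
      6 * ((Cᶜ).ncard : ℤ) - 12) := by
  obtain rfl : G = torus L := by
    ext x y
    rw [hG, torus_adj_iff]
  have hcount := ncard_hops_add_ncard_adjPairs (ncard_neighborSet_torus (by omega)) Cᶜ
  simp only [Set.notMem_compl_iff] at hcount
  have h12 : 12 ≤ ((torus L).adjPairs Cᶜ).ncard := by
    by_contra! h
    refine hdisc (connected_induce_of_outerBoundary_componentCompl
      (preconnected_torus (by omega)) hC fun D => ?_)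
    have hD : (D : Set (ZMod L × ZMod L)) ⊆ Cᶜ := fun _ => ComponentCompl.notMem_of_mem
    exact (connected_outerBoundary hL D.connected_induce
      ((Set.ncard_le_ncard (adjPairs_mono hD)).trans (by omega))).preconnected
  omega
end
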